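/- arXiv:2203.07768 — 11 statements merged into one kernel-verified Lean document; each statement's English description precedes it below -/
import Mathlib

section
/- Let n and ℓ be positive integers with n ≥ 2ℓ, and let G be a triangle-free simple graph on a vertex set V of size n whose matching number ν(G) equals ℓ. Then the number of edges of G satisfies |G| ≤ ℓ(n − ℓ). -/
/-- `M` is a matching in the simple graph `G`: a finite set of edges of `G`
that are pairwise disjoint (share no vertex). -/
def IsMatchingFinset {V : Type*} (G : SimpleGraph V) (M : Finset (Sym2 V)) : Prop :=
  ↑M ⊆ G.edgeSet ∧ (M : Set (Sym2 V)).Pairwise fun e f => ∀ v : V, v ∈ e → v ∉ f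

/-!
Let `M` be a maximum matching and `S` the set of its `2ν` vertices. By maximality no edge
avoids `S`, and since `G` is triangle-free every vertex has at most one neighbour on each edge
of `M`, hence at most `ν` neighbours in `S`. Summing degrees, a vertex outside `S` contributes
at most `ν` and a vertex in `S` contributes at most `ν` plus its neighbours outside `S`, which
are counted once more from the other side; this gives `2|G| ≤ ν (n + (n - 2ν))`.
-/

open Finset SimpleGraph

section

variable {V : Type*} {G : SimpleGraph V}

namespace SimpleGraph

theorem card_filter_adj_toFinset_le_one [DecidableEq V] [DecidableRel G.Adj]
    (htf : G.CliqueFree 3) {e : Sym2 V} (he : e ∈ G.edgeSet) (v : V) :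
    #{w ∈ e.toFinset | G.Adj v w} ≤ 1 := by
  induction e using Sym2.ind with
  | _ a b =>
  rw [card_le_one]
  intro x hx y hy
  simp only [mem_filter, Sym2.mem_toFinset, Sym2.mem_iff] at hx hy
  by_contra hxy
  have hind := isIndepSet_neighborSet_of_triangleFree G htf v hx.2 hy.2 hxy
  rcases hx.1 with rfl | rfl <;> rcases hy.1 with rfl | rfl
  · exact hxy rfl
  · exact hind he
  · exact hind he.symm
  · exact hxy rfl

theorem sum_card_filter_adj_eq_sum_degree [Fintype V] [DecidableRel G.Adj] (T : Finset V) :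
    ∑ v, #{w ∈ T | G.Adj v w} = ∑ w ∈ T, G.degree w := by
  refine (sum_card_bipartiteAbove_eq_sum_card_bipartiteBelow G.Adj).trans (sum_congr rfl ?_)
  intro w _
  rw [← card_neighborFinset_eq_degree, neighborFinset_eq_filter]
  simp only [bipartiteBelow, G.adj_comm]

theorem two_mul_card_edgeFinset_le_of_isIndepSet_compl [Fintype V] [DecidableEq V]
    [DecidableRel G.Adj] (S : Finset V) (k : ℕ) (hS : G.IsIndepSet ↑Sᶜ)
    (hk : ∀ v, #{w ∈ S | G.Adj v w} ≤ k) :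
    2 * #G.edgeFinset ≤ k * (Fintype.card V + #Sᶜ) := by
  have hdeg_split (v : V) : G.degree v ≤ #{w ∈ S | G.Adj v w} + #{w ∈ Sᶜ | G.Adj v w} := by
    rw [← card_neighborFinset_eq_degree, neighborFinset_eq_filter]
    refine (card_le_card fun w hw => ?_).trans (card_union_le _ _)
    by_cases hwS : w ∈ S <;> simp_all
  have hdeg_out (w : V) (hw : w ∈ Sᶜ) : G.degree w ≤ k := by
    refine le_trans ?_ (hk w)
    rw [← card_neighborFinset_eq_degree, neighborFinset_eq_filter]
    refine card_le_card fun x hx => ?_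
    simp only [mem_filter, mem_univ, true_and] at hx ⊢
    exact ⟨by_contra fun hxS => hS (mem_coe.2 hw) (mem_coe.2 (mem_compl.2 hxS)) hx.ne hx, hx⟩
  calc 2 * #G.edgeFinset = ∑ v, G.degree v := (sum_degrees_eq_twice_card_edges G).symm
    _ ≤ ∑ v, #{w ∈ S | G.Adj v w} + ∑ v, #{w ∈ Sᶜ | G.Adj v w} := by
      rw [← sum_add_distrib]; exact sum_le_sum fun v _ => hdeg_split v
    _ = ∑ v, #{w ∈ S | G.Adj v w} + ∑ w ∈ Sᶜ, G.degree w := by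
      rw [sum_card_filter_adj_eq_sum_degree Sᶜ]
    _ ≤ Fintype.card V * k + #Sᶜ * k := by
      gcongr
      · exact sum_le_card_nsmul _ _ k fun v _ => hk v
      · exact sum_le_card_nsmul _ _ k hdeg_out
    _ = k * (Fintype.card V + #Sᶜ) := by ring

end SimpleGraph

namespace IsMatchingFinset

variable {M : Finset (Sym2 V)}

theorem card_biUnion_toFinset [DecidableEq V] (hM : IsMatchingFinset G M) :
    #(M.biUnion Sym2.toFinset) = 2 * #M := by
  rw [card_biUnion, mul_comm, ← smul_eq_mul, ← sum_const]
  · exact sum_congr rfl fun e he => Sym2.card_toFinset_of_not_isDiag e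
      (G.not_isDiag_of_mem_edgeSet (hM.1 he))
  · intro e he f hf hef
    simp only [Function.onFun, Finset.disjoint_left, Sym2.mem_toFinset]
    exact hM.2 he hf hef

theorem insert_mk [DecidableEq V] (hM : IsMatchingFinset G M) {u v : V} (huv : G.Adj u v)
    (hu : u ∉ M.biUnion Sym2.toFinset) (hv : v ∉ M.biUnion Sym2.toFinset) :
    IsMatchingFinset G (insert s(u, v) M) := by
  have hunmatched {w : V} (hw : w ∈ s(u, v)) (e : Sym2 V) (he : e ∈ M) : w ∉ e := by
    intro hwe
    have hw' : w ∈ M.biUnion Sym2.toFinset := mem_biUnion.2 ⟨e, he, Sym2.mem_toFinset.2 hwe⟩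
    rcases Sym2.mem_iff.1 hw with rfl | rfl
    exacts [hu hw', hv hw']
  refine ⟨?_, ?_⟩
  · rw [coe_insert]
    exact Set.insert_subset huv hM.1
  · rw [coe_insert, Set.pairwise_insert]
    exact ⟨hM.2, fun e he _ => ⟨fun w hw => hunmatched hw e he,
      fun w hw hw' => hunmatched hw' e he hw⟩⟩

theorem isIndepSet_compl_biUnion_toFinset [Fintype V] [DecidableEq V]
    (hM : IsMatchingFinset G M) (hmax : ∀ M', IsMatchingFinset G M' → #M' ≤ #M) :
    G.IsIndepSet ↑(M.biUnion Sym2.toFinset)ᶜ := by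
  intro u hu v hv _ huv
  rw [mem_coe, mem_compl] at hu hv
  have hnew : s(u, v) ∉ M := fun h =>
    hu (mem_biUnion.2 ⟨_, h, Sym2.mem_toFinset.2 (Sym2.mem_mk_left u v)⟩)
  have := hmax _ (hM.insert_mk huv hu hv)
  rw [card_insert_of_notMem hnew] at this
  omega

theorem card_filter_adj_le [DecidableEq V] [DecidableRel G.Adj] (hM : IsMatchingFinset G M)
    (htf : G.CliqueFree 3) (v : V) : #{w ∈ M.biUnion Sym2.toFinset | G.Adj v w} ≤ #M := by
  rw [filter_biUnion]
  refine card_biUnion_le.trans ?_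
  simpa using sum_le_card_nsmul M _ 1 fun e he => card_filter_adj_toFinset_le_one htf (hM.1 he) v

end IsMatchingFinset

end

theorem stmt_0_general {V : Type*} [Fintype V] [DecidableEq V]
    (G : SimpleGraph V) [DecidableRel G.Adj]
    (n ℓ : ℕ)
    (hV : Fintype.card V = n)
    (htf : G.CliqueFree 3)
    (hexists : ∃ M : Finset (Sym2 V), IsMatchingFinset G M ∧ M.card = ℓ)
    (hmax : ∀ M : Finset (Sym2 V), IsMatchingFinset G M → M.card ≤ ℓ) :
    G.edgeFinset.card ≤ ℓ * (n - ℓ) := by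
  obtain ⟨M, hM, rfl⟩ := hexists
  set S := M.biUnion Sym2.toFinset
  have hS : #S = 2 * #M := hM.card_biUnion_toFinset
  have hSn : #S ≤ n := hV ▸ card_le_univ S
  have hedges := two_mul_card_edgeFinset_le_of_isIndepSet_compl S #M
    (hM.isIndepSet_compl_biUnion_toFinset hmax) (hM.card_filter_adj_le htf)
  rw [card_compl, hV] at hedges
  -- `2 * #M ≤ n` makes the truncated subtractions exact
  obtain ⟨m, rfl⟩ : ∃ m, n = 2 * #M + m := ⟨n - 2 * #M, by omega⟩
  rw [hS, show 2 * #M + m - 2 * #M = m by omega] at hedges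
  rw [show 2 * #M + m - #M = #M + m by omega]
  nlinarith

theorem stmt_0 {V : Type*} [Fintype V] [DecidableEq V]
    (G : SimpleGraph V) [DecidableRel G.Adj]
    (n ℓ : ℕ) (hn : 0 < n) (hℓ : 0 < ℓ) (hn2ℓ : 2 * ℓ ≤ n)
    (hV : Fintype.card V = n)
    (htf : G.CliqueFree 3)
    (hexists : ∃ M : Finset (Sym2 V), IsMatchingFinset G M ∧ M.card = ℓ)
    (hmax : ∀ M : Finset (Sym2 V), IsMatchingFinset G M → M.card ≤ ℓ) :
    G.edgeFinset.card ≤ ℓ * (n - ℓ) :=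
  stmt_0_general G n ℓ hV htf hexists hmax
end

section
/- Let n and ℓ be positive integers with n ≥ 2ℓ, and let G be a triangle-free simple graph on a vertex set V of size n with matching number ν(G) = ℓ. Then there exists a partition V = X ⊔ Y ⊔ Z with X = {x₁, …, x_ℓ} and Y = {y₁, …, y_ℓ} (both of size ℓ) such that (i) {x_i, y_i} is an edge of G for every 1 ≤ i ≤ ℓ, and (ii) for every z ∈ Z, every neighbor of z in G lies in X. -/
/-!
Fix a maximum matching `M`. An unmatched vertex has only matched neighbours, or `M` could be
enlarged by one edge. For an edge `ab ∈ M`, the ends `a` and `b` cannot both have unmatched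
neighbours `z` and `z'`: if `z ≠ z'` the path `z a b z'` is augmenting, and if `z = z'` then
`z a b` is a triangle. So every edge of `M` can be written `xy` with `y` having no unmatched
neighbour; the `x`'s, the `y`'s and the unmatched vertices form the required partition.
-/

namespace IsMatchingFinset

variable {V : Type*} {G : SimpleGraph V} {M N : Finset (Sym2 V)}

theorem mono (hM : IsMatchingFinset G M) (hNM : N ⊆ M) : IsMatchingFinset G N :=
  ⟨(Finset.coe_subset.mpr hNM).trans hM.1, hM.2.mono (Finset.coe_subset.mpr hNM)⟩

theorem eq_of_mem_of_mem (hM : IsMatchingFinset G M) {e f : Sym2 V} (he : e ∈ M) (hf : f ∈ M)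
    {v : V} (hve : v ∈ e) (hvf : v ∈ f) : e = f := by
  by_contra hef
  exact hM.2 he hf hef v hve hvf

theorem insert [DecidableEq V] (hM : IsMatchingFinset G M) {e : Sym2 V} (he : e ∈ G.edgeSet)
    (hfree : ∀ v ∈ e, ∀ f ∈ M, v ∉ f) : IsMatchingFinset G (insert e M) := by
  refine ⟨?_, ?_⟩
  · rw [Finset.coe_insert]
    exact Set.insert_subset he hM.1
  · rw [Finset.coe_insert, Set.pairwise_insert]
    exact ⟨hM.2, fun f hf _ =>
      ⟨fun v hv => hfree v hv f hf, fun v hvf hve => hfree v hve f hf hvf⟩⟩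

theorem card_insert_le [DecidableEq V] (hmax : ∀ N, IsMatchingFinset G N → N.card ≤ M.card)
    (hN : IsMatchingFinset G N) {e : Sym2 V} (he : e ∈ G.edgeSet)
    (hfree : ∀ v ∈ e, ∀ f ∈ N, v ∉ f) : N.card + 1 ≤ M.card := by
  have hnotMem : e ∉ N := fun heN => hfree _ e.out_fst_mem e heN e.out_fst_mem
  simpa [Finset.card_insert_of_notMem hnotMem] using hmax _ (hN.insert he hfree)

section Maximum

variable (hM : IsMatchingFinset G M) (hmax : ∀ N, IsMatchingFinset G N → N.card ≤ M.card)
include hM hmax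

theorem exists_mem_of_adj {z w : V} (hz : ∀ f ∈ M, z ∉ f) (hzw : G.Adj z w) :
    ∃ f ∈ M, w ∈ f := by
  classical
  by_contra! hw
  have := card_insert_le hmax hM (e := s(z, w)) hzw (by simp_all)
  omega

theorem eq_of_adj_of_adj {a b z z' : V} (hab : s(a, b) ∈ M) (hz : ∀ f ∈ M, z ∉ f)
    (hz' : ∀ f ∈ M, z' ∉ f) (hza : G.Adj z a) (hz'b : G.Adj z' b) : z = z' := by
  classical
  by_contra hzz'
  have hb : ∀ f ∈ M.erase s(a, b), b ∉ f := fun f hf hbf =>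
    Finset.ne_of_mem_erase hf (hM.eq_of_mem_of_mem (Finset.mem_of_mem_erase hf) hab hbf
      (Sym2.mem_mk_right a b))
  have ha : ∀ f ∈ M.erase s(a, b), a ∉ f := fun f hf haf =>
    Finset.ne_of_mem_erase hf (hM.eq_of_mem_of_mem (Finset.mem_of_mem_erase hf) hab haf
      (Sym2.mem_mk_left a b))
  have hzM : ∀ f ∈ M.erase s(a, b), z ∉ f := fun f hf => hz f (Finset.mem_of_mem_erase hf)
  have hz'M : ∀ f ∈ M.erase s(a, b), z' ∉ f := fun f hf => hz' f (Finset.mem_of_mem_erase hf)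
  have hzb : z ≠ b := fun h => hz _ hab (h ▸ Sym2.mem_mk_right a b)
  have haz' : a ≠ z' := fun h => hz' _ hab (h ▸ Sym2.mem_mk_left a b)
  have hab' : a ≠ b := (hM.1 hab : G.Adj a b).ne
  -- swap `ab` for `z'b` and `za`
  have hN := (hM.mono (M.erase_subset s(a, b))).insert (e := s(z', b)) hz'b (by
    simp only [Sym2.mem_iff, forall_eq_or_imp, forall_eq]
    exact ⟨hz'M, hb⟩)
  have hcard := card_insert_le hmax hN (e := s(z, a)) hza (by
    simp only [Sym2.mem_iff, forall_eq_or_imp, forall_eq, Finset.mem_insert, not_or]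
    exact ⟨⟨⟨hzz', hzb⟩, hzM⟩, ⟨haz', hab'⟩, ha⟩)
  have hN₀ : (M.erase s(a, b)).card + 1 = M.card := Finset.card_erase_add_one hab
  rw [Finset.card_insert_of_notMem fun h => hz'M _ h (Sym2.mem_mk_left z' b)] at hcard
  omega

theorem exists_eq_mk_forall_not_adj (htf : G.CliqueFree 3) {e : Sym2 V} (he : e ∈ M) :
    ∃ x y, e = s(x, y) ∧ ∀ z, (∀ f ∈ M, z ∉ f) → ¬ G.Adj z y := by
  classical
  induction e using Sym2.ind with
  | h a b =>
    by_cases hb : ∃ z, (∀ f ∈ M, z ∉ f) ∧ G.Adj z b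
    · obtain ⟨z, hz, hzb⟩ := hb
      refine ⟨b, a, Sym2.eq_swap, fun z' hz' hz'a => ?_⟩
      obtain rfl := hM.eq_of_adj_of_adj hmax he hz' hz hz'a hzb
      exact (SimpleGraph.is3Clique_triple_iff.mpr ⟨hz'a, hzb, hM.1 he⟩).not_cliqueFree htf
    · push Not at hb
      exact ⟨a, b, rfl, hb⟩

end Maximum

theorem exists_fin_enum (hM : IsMatchingFinset G M) {ℓ : ℕ} (hcard : M.card = ℓ)
    {P : V → V → Prop} (hP : ∀ e ∈ M, ∃ x y, e = s(x, y) ∧ P x y) :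
    ∃ x y : Fin ℓ → V, Function.Injective x ∧ Function.Injective y ∧
      (∀ i j, x i ≠ y j) ∧ (∀ i, G.Adj (x i) (y i) ∧ P (x i) (y i)) ∧
      ∀ e ∈ M, ∃ i, e = s(x i, y i) := by
  let enum : M ≃ Fin ℓ := Fintype.equivFinOfCardEq (by simpa using hcard)
  let edge : Fin ℓ → Sym2 V := fun i => enum.symm i
  have hedge : ∀ i, edge i ∈ M := fun i => (enum.symm i).2
  choose x y hxy hPxy using fun i => hP (edge i) (hedge i)
  have hmem : ∀ i, x i ∈ edge i ∧ y i ∈ edge i := fun i => by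
    rw [hxy i]
    exact ⟨Sym2.mem_mk_left _ _, Sym2.mem_mk_right _ _⟩
  have hinj : ∀ {i j v}, v ∈ edge i → v ∈ edge j → i = j := fun hi hj =>
    enum.symm.injective (Subtype.ext (hM.eq_of_mem_of_mem (hedge _) (hedge _) hi hj))
  have hadj : ∀ i, G.Adj (x i) (y i) := fun i => by
    have := hM.1 (hedge i)
    rwa [hxy i] at this
  refine ⟨x, y, fun i j h => hinj (hmem i).1 (h ▸ (hmem j).1),
    fun i j h => hinj (hmem i).2 (h ▸ (hmem j).2), fun i j h => ?_,
    fun i => ⟨hadj i, hPxy i⟩, fun e he => ⟨enum ⟨e, he⟩, ?_⟩⟩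
  · obtain rfl := hinj (hmem i).1 (h ▸ (hmem j).2)
    exact (hadj i).ne h
  · simpa [edge] using hxy (enum ⟨e, he⟩)

end IsMatchingFinset

theorem stmt_1_general {V : Type*}
    (G : SimpleGraph V)
    (ℓ : ℕ)
    (htf : G.CliqueFree 3)
    (hexists : ∃ M : Finset (Sym2 V), IsMatchingFinset G M ∧ M.card = ℓ)
    (hmax : ∀ M : Finset (Sym2 V), IsMatchingFinset G M → M.card ≤ ℓ) :
    ∃ x y : Fin ℓ → V,
      Function.Injective x ∧ Function.Injective y ∧
      (∀ i j : Fin ℓ, x i ≠ y j) ∧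
      (∀ i : Fin ℓ, G.Adj (x i) (y i)) ∧
      (∀ z : V, z ∉ Set.range x → z ∉ Set.range y →
        ∀ w : V, G.Adj z w → w ∈ Set.range x) := by
  obtain ⟨M, hM, rfl⟩ := hexists
  obtain ⟨x, y, hx, hy, hxy, hadj, hcover⟩ :=
    hM.exists_fin_enum rfl fun e he => hM.exists_eq_mk_forall_not_adj hmax htf he
  refine ⟨x, y, hx, hy, hxy, fun i => (hadj i).1, fun z hzx hzy w hzw => ?_⟩
  have hz : ∀ f ∈ M, z ∉ f := fun f hf hzf => by
    obtain ⟨i, rfl⟩ := hcover f hf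
    rcases Sym2.mem_iff.mp hzf with rfl | rfl
    exacts [hzx ⟨i, rfl⟩, hzy ⟨i, rfl⟩]
  obtain ⟨f, hf, hwf⟩ := hM.exists_mem_of_adj hmax hz hzw
  obtain ⟨i, rfl⟩ := hcover f hf
  rcases Sym2.mem_iff.mp hwf with rfl | rfl
  exacts [⟨i, rfl⟩, absurd hzw ((hadj i).2 z hz)]

theorem stmt_1 {V : Type*} [Fintype V] [DecidableEq V]
    (G : SimpleGraph V) [DecidableRel G.Adj]
    (n ℓ : ℕ) (hn : 0 < n) (hℓ : 0 < ℓ) (hn2ℓ : 2 * ℓ ≤ n)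
    (hV : Fintype.card V = n)
    (htf : G.CliqueFree 3)
    (hexists : ∃ M : Finset (Sym2 V), IsMatchingFinset G M ∧ M.card = ℓ)
    (hmax : ∀ M : Finset (Sym2 V), IsMatchingFinset G M → M.card ≤ ℓ) :
    ∃ x y : Fin ℓ → V,
      Function.Injective x ∧ Function.Injective y ∧
      (∀ i j : Fin ℓ, x i ≠ y j) ∧
      (∀ i : Fin ℓ, G.Adj (x i) (y i)) ∧
      (∀ z : V, z ∉ Set.range x → z ∉ Set.range y →
        ∀ w : V, G.Adj z w → w ∈ Set.range x) :=
  stmt_1_general G ℓ htf hexists hmax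
end

section
/- Let t ≥ 4 and let G₁, …, G_t be simple graphs on the same vertex set V with |V| = n, and suppose G₁, …, G_t are rainbow-triangle-free. Then |G₁| + |G₂| + ⋯ + |G_t| ≤ t·⌊n²/4⌋. -/
/-- A family of simple graphs on the vertex set `V`, indexed by `ι`, is
rainbow-triangle-free: there are no pairwise distinct indices `i, j, k` and
distinct vertices `a, b, c` such that `{a,b}` is an edge of `G i`, `{b,c}` is
an edge of `G j` and `{a,c}` is an edge of `G k`.  (Distinctness of the
vertices is automatic from adjacency.) -/
def RainbowTriangleFree {V ι : Type*} (G : ι → SimpleGraph V) : Prop :=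
  ∀ i j k : ι, i ≠ j → j ≠ k → i ≠ k →
    ∀ a b c : V, ¬((G i).Adj a b ∧ (G j).Adj b c ∧ (G k).Adj a c)

private lemma arith_aux (n : ℕ) : n * (n - 1) ≤ 4 * (n ^ 2 / 4) := by
  rcases Nat.even_or_odd n with ⟨k, hk⟩ | ⟨k, hk⟩
  · have e1 : n ^ 2 = 4 * (k * k) := by subst hk; ring
    have e2 : n * (n - 1) ≤ n ^ 2 := by
      calc n * (n - 1) ≤ n * n := Nat.mul_le_mul_left n (Nat.sub_le n 1)
        _ = n ^ 2 := (pow_two n).symm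
    omega
  · have e1 : n ^ 2 = 4 * (k * k + k) + 1 := by subst hk; ring
    have e3 : n - 1 = 2 * k := by omega
    have e2 : n * (n - 1) = 4 * (k * k) + 2 * k := by rw [e3]; subst hk; ring
    omega

private lemma lemB {V : Type*} [DecidableEq V] (f : V → V → ℕ)
    (hsymm : ∀ u v, f u v = f v u) (hirr : ∀ u, f u u = 0)
    (hle : ∀ u v, f u v ≤ 2)
    (hcond : ∀ u v w, f u v = 2 → f u w = 2 → f v w = 0)
    (s : Finset V) : (∑ u ∈ s, ∑ v ∈ s, f u v) ≤ 4 * (s.card ^ 2 / 4) := by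
  induction s using Finset.strongInduction with
  | _ s ih =>
    by_cases hex : ∃ u ∈ s, ∃ v ∈ s, f u v = 2
    · obtain ⟨u, hu, v, hv, huv⟩ := hex
      have hne : u ≠ v := by rintro rfl; rw [hirr] at huv; omega
      set s' := s \ {u, v} with hs'
      have hsub : s' ⊂ s := Finset.sdiff_ssubset
        (by intro x hx; simp only [Finset.mem_insert, Finset.mem_singleton] at hx
            rcases hx with rfl | rfl
            · exact hu
            · exact hv)
        ⟨u, Finset.mem_insert_self u {v}⟩
      have ihs := ih s' hsub
      have hvs' : v ∉ s' := by simp [hs']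
      have hus' : u ∉ insert v s' := by simp [hs', hne]
      have hs : s = insert u (insert v s') := by
        ext x
        simp only [Finset.mem_insert, Finset.mem_sdiff, Finset.mem_singleton, hs']
        constructor
        · intro hx
          by_cases h1 : x = u
          · exact Or.inl h1
          by_cases h2 : x = v
          · exact Or.inr (Or.inl h2)
          · exact Or.inr (Or.inr ⟨hx, by tauto⟩)
        · rintro (rfl | rfl | ⟨hx, -⟩)
          · exact hu
          · exact hv
          · exact hx
      have hcard : s.card = s'.card + 2 := by
        rw [hs, Finset.card_insert_of_notMem hus', Finset.card_insert_of_notMem hvs']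
      have hdiv : (s'.card + 2) ^ 2 / 4 = s'.card ^ 2 / 4 + (s'.card + 1) := by
        have h4 : (s'.card + 2) ^ 2 = s'.card ^ 2 + 4 * (s'.card + 1) := by ring
        rw [h4, Nat.add_mul_div_left _ _ (by norm_num : (0:ℕ) < 4)]
      have hcross : ∀ w ∈ s', f u w + f v w ≤ 2 := by
        intro w hw
        have h1 := hle u w
        have h2 := hle v w
        by_cases e1 : f u w = 2
        · have h0 := hcond u w v e1 huv
          have h0' : f v w = 0 := by rw [hsymm v w]; exact h0
          omega
        · by_cases e2 : f v w = 2
          · have h0 := hcond v w u e2 (by rw [hsymm v u]; exact huv)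
            have h0' : f u w = 0 := by rw [hsymm u w]; exact h0
            omega
          · omega
      have hrow : (∑ w ∈ s', f u w) + (∑ w ∈ s', f v w) ≤ 2 * s'.card := by
        rw [← Finset.sum_add_distrib]
        calc (∑ w ∈ s', (f u w + f v w)) ≤ ∑ w ∈ s', 2 := Finset.sum_le_sum hcross
          _ = 2 * s'.card := by rw [Finset.sum_const, smul_eq_mul, mul_comm]
      have e4 : (∑ x ∈ s', f x u) = ∑ x ∈ s', f u x :=
        Finset.sum_congr rfl fun x _ => hsymm x u
      have e5 : (∑ x ∈ s', f x v) = ∑ x ∈ s', f v x :=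
        Finset.sum_congr rfl fun x _ => hsymm x v
      have huv2 : f v u = 2 := by rw [hsymm v u]; exact huv
      have hiu := hirr u
      have hiv := hirr v
      rw [hcard, hdiv]
      rw [hs, Finset.sum_insert hus', Finset.sum_insert hvs']
      simp only [Finset.sum_insert hus', Finset.sum_insert hvs', Finset.sum_add_distrib]
      rw [e4, e5]
      set A := ∑ w ∈ s', f u w with hA
      set B := ∑ w ∈ s', f v w with hB
      set S := ∑ x ∈ s', ∑ y ∈ s', f x y with hS
      set c := s'.card with hc
      set q := c ^ 2 / 4 with hq
      omega
    · push_neg at hex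
      calc (∑ u ∈ s, ∑ v ∈ s, f u v) ≤ ∑ _u ∈ s, (s.card - 1) := by
            apply Finset.sum_le_sum
            intro u hu
            rw [← Finset.sum_erase s (hirr u)]
            calc (∑ v ∈ s.erase u, f u v) ≤ ∑ _v ∈ s.erase u, 1 := by
                  apply Finset.sum_le_sum
                  intro v hv
                  have h1 := hex u hu v (Finset.mem_of_mem_erase hv)
                  have h2 := hle u v
                  omega
              _ = (s.erase u).card := by rw [Finset.sum_const, smul_eq_mul, mul_one]
              _ = s.card - 1 := Finset.card_erase_of_mem hu
        _ = s.card * (s.card - 1) := by rw [Finset.sum_const, smul_eq_mul]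
        _ ≤ 4 * (s.card ^ 2 / 4) := arith_aux _

theorem stmt_3 {V : Type*} [Fintype V] [DecidableEq V] (n : ℕ) (hV : Fintype.card V = n)
    (t : ℕ) (ht : 4 ≤ t)
    (G : Fin t → SimpleGraph V) [∀ i, DecidableRel (G i).Adj]
    (hRBT : RainbowTriangleFree G) :
    ∑ i, (G i).edgeFinset.card ≤ t * (n ^ 2 / 4) := by
  classical
  set m : V → V → ℕ := fun u v => (Finset.univ.filter fun i => (G i).Adj u v).card with hm
  have hmsymm : ∀ u v, m u v = m v u := by
    intro u v
    simp only [hm]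
    congr 1
    apply Finset.filter_congr
    intro i _
    exact (G i).adj_comm u v
  have hmirr : ∀ u, m u u = 0 := by
    intro u
    simp only [hm, Finset.card_eq_zero, Finset.filter_eq_empty_iff]
    exact fun i _ => (G i).irrefl
  have hmle : ∀ u v, m u v ≤ t := by
    intro u v
    simp only [hm]
    calc (Finset.univ.filter fun i => (G i).Adj u v).card ≤ Finset.univ.card :=
          Finset.card_filter_le _ _
      _ = t := by simp
  have hA : ∀ u v w, 3 ≤ m u v → 3 ≤ m u w → m v w = 0 := by
    intro u v w h1 h2
    by_contra h3
    have h3' : 0 < m v w := Nat.pos_of_ne_zero h3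
    obtain ⟨i, hi⟩ := Finset.card_pos.mp h3'
    rw [Finset.mem_filter] at hi
    have h4 : 0 < ((Finset.univ.filter fun j => (G j).Adj u v) \ {i}).card := by
      have hle := Finset.le_card_sdiff ({i} : Finset (Fin t))
        (Finset.univ.filter fun j => (G j).Adj u v)
      simp only [Finset.card_singleton] at hle
      have : m u v = (Finset.univ.filter fun j => (G j).Adj u v).card := rfl
      omega
    obtain ⟨j, hj⟩ := Finset.card_pos.mp h4
    rw [Finset.mem_sdiff, Finset.mem_filter, Finset.mem_singleton] at hj
    have h5 : 0 < ((Finset.univ.filter fun k => (G k).Adj u w) \ {i, j}).card := by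
      have hle := Finset.le_card_sdiff ({i, j} : Finset (Fin t))
        (Finset.univ.filter fun k => (G k).Adj u w)
      have hc : ({i, j} : Finset (Fin t)).card ≤ 2 :=
        le_trans (Finset.card_insert_le i {j}) (by simp)
      have : m u w = (Finset.univ.filter fun k => (G k).Adj u w).card := rfl
      omega
    obtain ⟨k, hk⟩ := Finset.card_pos.mp h5
    rw [Finset.mem_sdiff, Finset.mem_filter, Finset.mem_insert, Finset.mem_singleton] at hk
    push_neg at hk
    exact hRBT j k i (fun h => hk.2.2 h.symm) hk.2.1 hj.2 v u w
      ⟨hj.1.2.symm, hk.1.2, hi.2⟩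
  -- Apply lemB to f = h + g
  have hB1 := lemB (fun u v => (if 3 ≤ m u v then 1 else 0) + (if 1 ≤ m u v then 1 else 0))
    (fun u v => by
      show (if 3 ≤ m u v then 1 else 0) + (if 1 ≤ m u v then 1 else 0)
        = (if 3 ≤ m v u then 1 else 0) + (if 1 ≤ m v u then 1 else 0)
      rw [hmsymm u v])
    (fun u => by
      show (if 3 ≤ m u u then 1 else 0) + (if 1 ≤ m u u then 1 else 0) = 0
      rw [hmirr u]; norm_num)
    (fun u v => by
      show (if 3 ≤ m u v then 1 else 0) + (if 1 ≤ m u v then 1 else 0) ≤ 2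
      split_ifs <;> omega)
    (fun u v w e1 e2 => by
      have t1 : 3 ≤ m u v := by split_ifs at e1 <;> omega
      have t2 : 3 ≤ m u w := by split_ifs at e2 <;> omega
      show (if 3 ≤ m v w then 1 else 0) + (if 1 ≤ m v w then 1 else 0) = 0
      rw [hA u v w t1 t2]; norm_num)
    Finset.univ
  -- Apply lemB to f = h + h
  have hB2 := lemB (fun u v => (if 3 ≤ m u v then 1 else 0) + (if 3 ≤ m u v then 1 else 0))
    (fun u v => by
      show (if 3 ≤ m u v then 1 else 0) + (if 3 ≤ m u v then 1 else 0)
        = (if 3 ≤ m v u then 1 else 0) + (if 3 ≤ m v u then 1 else 0)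
      rw [hmsymm u v])
    (fun u => by
      show (if 3 ≤ m u u then 1 else 0) + (if 3 ≤ m u u then 1 else 0) = 0
      rw [hmirr u]; norm_num)
    (fun u v => by
      show (if 3 ≤ m u v then 1 else 0) + (if 3 ≤ m u v then 1 else 0) ≤ 2
      split_ifs <;> omega)
    (fun u v w e1 e2 => by
      have t1 : 3 ≤ m u v := by split_ifs at e1 <;> omega
      have t2 : 3 ≤ m u w := by split_ifs at e2 <;> omega
      show (if 3 ≤ m v w then 1 else 0) + (if 3 ≤ m v w then 1 else 0) = 0
      rw [hA u v w t1 t2]; norm_num)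
    Finset.univ
  rw [Finset.card_univ, hV] at hB1 hB2
  -- pointwise bound
  have hpoint : ∀ u v, 2 * m u v ≤
      (t - 4) * ((if 3 ≤ m u v then 1 else 0) + (if 3 ≤ m u v then 1 else 0)) +
      4 * ((if 3 ≤ m u v then 1 else 0) + (if 1 ≤ m u v then 1 else 0)) := by
    intro u v
    have := hmle u v
    split_ifs <;> omega
  -- sum the pointwise bound
  have hsum : (∑ u : V, ∑ v : V, 2 * m u v) ≤
      (t - 4) * (4 * (n ^ 2 / 4)) + 4 * (4 * (n ^ 2 / 4)) := by
    calc (∑ u : V, ∑ v : V, 2 * m u v)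
        ≤ ∑ u : V, ∑ v : V,
          ((t - 4) * ((if 3 ≤ m u v then 1 else 0) + (if 3 ≤ m u v then 1 else 0)) +
           4 * ((if 3 ≤ m u v then 1 else 0) + (if 1 ≤ m u v then 1 else 0))) :=
          Finset.sum_le_sum fun u _ => Finset.sum_le_sum fun v _ => hpoint u v
      _ = (t - 4) * (∑ u : V, ∑ v : V,
            ((if 3 ≤ m u v then 1 else 0) + (if 3 ≤ m u v then 1 else 0))) +
          4 * (∑ u : V, ∑ v : V,
            ((if 3 ≤ m u v then 1 else 0) + (if 1 ≤ m u v then 1 else 0))) := by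
          simp only [mul_add, Finset.mul_sum, Finset.sum_add_distrib]
      _ ≤ (t - 4) * (4 * (n ^ 2 / 4)) + 4 * (4 * (n ^ 2 / 4)) :=
          add_le_add (Nat.mul_le_mul_left _ hB2) (Nat.mul_le_mul_left _ hB1)
  -- relate the double sum to the edge counts
  have edge : ∀ i, 2 * (G i).edgeFinset.card =
      ∑ u : V, ∑ v : V, (if (G i).Adj u v then 1 else 0) := by
    intro i
    rw [← SimpleGraph.sum_degrees_eq_twice_card_edges]
    apply Finset.sum_congr rfl
    intro u _
    rw [SimpleGraph.degree, SimpleGraph.neighborFinset_eq_filter, Finset.card_filter]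
  have total : 2 * ∑ i, (G i).edgeFinset.card = ∑ u : V, ∑ v : V, m u v := by
    rw [Finset.mul_sum]
    calc (∑ i, 2 * (G i).edgeFinset.card)
        = ∑ i, ∑ u : V, ∑ v : V, (if (G i).Adj u v then 1 else 0) :=
          Finset.sum_congr rfl fun i _ => edge i
      _ = ∑ u : V, ∑ i, ∑ v : V, (if (G i).Adj u v then 1 else 0) := Finset.sum_comm
      _ = ∑ u : V, ∑ v : V, ∑ i, (if (G i).Adj u v then 1 else 0) :=
          Finset.sum_congr rfl fun u _ => Finset.sum_comm
      _ = ∑ u : V, ∑ v : V, m u v := by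
          apply Finset.sum_congr rfl
          intro u _
          apply Finset.sum_congr rfl
          intro v _
          rw [hm]
          exact (Finset.card_filter _ _).symm
  have h2m : (∑ u : V, ∑ v : V, 2 * m u v) = 2 * (2 * ∑ i, (G i).edgeFinset.card) := by
    rw [total]
    simp only [Finset.mul_sum]
  obtain ⟨d, rfl⟩ : ∃ d, t = d + 4 := ⟨t - 4, by omega⟩
  have hd : d + 4 - 4 = d := by omega
  rw [hd] at hsum
  have hfin : d * (4 * (n ^ 2 / 4)) + 4 * (4 * (n ^ 2 / 4)) = 4 * ((d + 4) * (n ^ 2 / 4)) := by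
    ring
  rw [hfin, h2m] at hsum
  have : 4 * (∑ i, (G i).edgeFinset.card) = 2 * (2 * ∑ i, (G i).edgeFinset.card) := by ring
  rw [← this] at hsum
  exact Nat.le_of_mul_le_mul_left hsum (by norm_num)
end

section
/- Let B be a bipartite graph with partite sets X and Y where |X| = |Y| = q ≥ 1, with matching number ν(B) < q, and suppose |B| = q(q − 1). Then B is a complete bipartite graph between a (q−1)-element subset of one partite set and the whole other partite set; that is, there is a vertex v in X ∪ Y that is isolated in B, and every pair (x, y) with x ∈ X \ {v}, y ∈ Y \ {v} is an edge of B. -/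
theorem stmt_7 {V : Type*} [Fintype V] [DecidableEq V]
    (B : SimpleGraph V) [DecidableRel B.Adj]
    (X Y : Finset V) (hdisj : Disjoint X Y) (hcover : X ∪ Y = Finset.univ)
    (hbip : ∀ a b : V, B.Adj a b → (a ∈ X ∧ b ∈ Y) ∨ (a ∈ Y ∧ b ∈ X))
    (q : ℕ) (hq : 1 ≤ q) (hX : X.card = q) (hY : Y.card = q)
    (hν : ∀ M : Finset (Sym2 V), IsMatchingFinset B M → M.card < q)
    (hcard : B.edgeFinset.card = q * (q - 1)) :
    ∃ v ∈ X ∪ Y, (∀ w : V, ¬ B.Adj v w) ∧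
      ∀ x ∈ X, ∀ y ∈ Y, x ≠ v → y ≠ v → B.Adj x y := by
  classical
  set d : V → Finset V := fun x => Y.filter (B.Adj x) with hd
  have hne : ∀ {a b : V}, a ∈ X → b ∈ Y → a ≠ b := fun {a b} ha hb h =>
    Finset.disjoint_left.mp hdisj ha (h ▸ hb)
  -- edge count as a sum of degrees over X
  have hsum : ∑ x ∈ X, (d x).card = q * (q - 1) := by
    rw [← hcard, ← Finset.card_sigma]
    apply Finset.card_bij (fun p _ => s(p.1, p.2))
    · rintro ⟨a, b⟩ hp
      rw [Finset.mem_sigma] at hp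
      simp only [hd, Finset.mem_filter] at hp
      simpa [SimpleGraph.mem_edgeFinset] using hp.2.2
    · rintro ⟨a₁, b₁⟩ h₁ ⟨a₂, b₂⟩ h₂ heq
      rw [Finset.mem_sigma] at h₁ h₂
      simp only [hd, Finset.mem_filter] at h₁ h₂
      rw [Sym2.eq_iff] at heq
      rcases heq with ⟨rfl, rfl⟩ | ⟨h1, h2⟩
      · rfl
      · exact absurd h1 (hne h₁.1 h₂.2.1)
    · intro e he
      induction e using Sym2.ind with
      | _ a b =>
        have hab : B.Adj a b := by simpa [SimpleGraph.mem_edgeFinset] using he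
        rcases hbip a b hab with ⟨ha, hb⟩ | ⟨ha, hb⟩
        · exact ⟨⟨a, b⟩, Finset.mem_sigma.mpr ⟨ha, by simp [hd, hb, hab]⟩, rfl⟩
        · exact ⟨⟨b, a⟩, Finset.mem_sigma.mpr ⟨hb, by simp [hd, ha, hab.symm]⟩,
            Sym2.eq_swap⟩
  -- Hall's condition fails
  have hall : ¬ ∀ S : Finset {x // x ∈ X}, S.card ≤ (S.biUnion (fun x => d x.val)).card := by
    intro hall
    obtain ⟨f, hfinj, hf⟩ :=
      (Finset.all_card_le_biUnion_card_iff_exists_injective (fun x : {x // x ∈ X} => d x.val)).mp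
        hall
    have hfY : ∀ x : {x // x ∈ X}, f x ∈ Y ∧ B.Adj x.val (f x) := fun x => by
      have := hf x; simpa [hd, Finset.mem_filter] using this
    set M : Finset (Sym2 V) := Finset.univ.image (fun x : {x // x ∈ X} => s(x.val, f x)) with hM
    have hMcard : M.card = q := by
      rw [hM, Finset.card_image_of_injective _ ?_, Finset.card_univ, Fintype.card_coe, hX]
      intro x x' h
      rw [Sym2.eq_iff] at h
      rcases h with ⟨h1, h2⟩ | ⟨h1, h2⟩
      · exact Subtype.ext h1
      · exact absurd h1 (hne x.2 (hfY x').1)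
    have : IsMatchingFinset B M := by
      constructor
      · intro e he
        simp only [hM, Finset.coe_image, Set.mem_image] at he
        obtain ⟨x, -, rfl⟩ := he
        exact (hfY x).2
      · intro e he f' hf' hef v hv1 hv2
        simp only [hM, Finset.coe_image, Set.mem_image] at he hf'
        obtain ⟨x, -, rfl⟩ := he
        obtain ⟨x', -, rfl⟩ := hf'
        rw [Sym2.mem_iff] at hv1 hv2
        rcases hv1 with rfl | rfl <;> rcases hv2 with h | h
        · exact hef (by rw [Subtype.ext h])
        · exact hne x.2 (hfY x').1 h
        · exact (hne x'.2 (hfY x).1 h.symm).elim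
        · exact hef (by rw [hfinj h])
    exact absurd hMcard (Nat.ne_of_lt (hν M this))
  push_neg at hall
  obtain ⟨S, hS⟩ := hall
  set NS : Finset V := S.biUnion (fun x => d x.val) with hNS
  set S' : Finset V := S.image Subtype.val with hS'
  have hS'card : S'.card = S.card :=
    Finset.card_image_of_injective _ Subtype.val_injective
  have hS'X : S' ⊆ X := by
    intro x hx
    simp only [hS', Finset.mem_image] at hx
    obtain ⟨⟨x, hxX⟩, -, rfl⟩ := hx
    exact hxX
  have hsub : ∀ x ∈ S', d x ⊆ NS := by
    intro x hx
    simp only [hS', Finset.mem_image] at hx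
    obtain ⟨x', hx', rfl⟩ := hx
    exact Finset.subset_biUnion_of_mem (fun x => d x.val) hx'
  set s := S'.card with hs
  set n := NS.card with hn
  have hns : n < s := by omega
  have hsq : s ≤ q := hX ▸ Finset.card_le_card hS'X
  have hdY : ∀ x, d x ⊆ Y := fun x => Finset.filter_subset _ _
  have hdq : ∀ x, (d x).card ≤ q := fun x => hY ▸ Finset.card_le_card (hdY x)
  have hsplit : ∑ x ∈ X \ S', (d x).card + ∑ x ∈ S', (d x).card = q * (q - 1) := by
    rw [Finset.sum_sdiff hS'X]; exact hsum
  have hSsum : ∑ x ∈ S', (d x).card ≤ s * n := by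
    calc ∑ x ∈ S', (d x).card ≤ ∑ _x ∈ S', n :=
          Finset.sum_le_sum fun x hx => Finset.card_le_card (hsub x hx)
      _ = s * n := by rw [Finset.sum_const, smul_eq_mul]
  have hXsum : ∑ x ∈ X \ S', (d x).card ≤ (q - s) * q := by
    calc ∑ x ∈ X \ S', (d x).card ≤ ∑ _x ∈ X \ S', q :=
          Finset.sum_le_sum fun x _ => hdq x
      _ = (q - s) * q := by rw [Finset.sum_const, smul_eq_mul, Finset.card_sdiff_of_subset hS'X, hX]
  have hkey : q * (q - 1) ≤ s * n + (q - s) * q := by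
    rw [← hsplit]; omega
  -- numeric case analysis
  have hcase : (s = 1 ∧ n = 0) ∨ (s = q ∧ n = q - 1) := by
    rcases Nat.lt_or_ge s 2 with h2 | h2
    · left
      constructor
      · omega
      · omega
    · right
      have hsq' : s = q := by
        have h1 : s * n + (q - s) * q ≤ s * (s - 1) + (q - s) * q :=
          Nat.add_le_add_right (Nat.mul_le_mul_left s (by omega)) _
        have h3 := le_trans hkey h1
        nlinarith [Nat.sub_add_cancel hsq, Nat.sub_add_cancel hq,
          Nat.sub_add_cancel (le_trans (by omega : 1 ≤ s) hsq)]
      refine ⟨hsq', ?_⟩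
      have h1 : q * (q - 1) ≤ q * n := by
        have h := hkey
        rw [hsq', Nat.sub_self, Nat.zero_mul, Nat.add_zero] at h
        exact h
      have h2 := Nat.le_of_mul_le_mul_left h1 (by omega : 0 < q)
      omega
  rcases hcase with ⟨hs1, hn0⟩ | ⟨hsq', hnq⟩
  · -- case s = 1 : isolated vertex in X
    obtain ⟨v, hv⟩ := Finset.card_eq_one.mp (hs ▸ hs1 : S'.card = 1)
    have hvX : v ∈ X := hS'X (hv ▸ Finset.mem_singleton_self v)
    have hdv : d v = ∅ := by
      have h1 : d v ⊆ NS := hsub v (hv ▸ Finset.mem_singleton_self v)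
      have h2 : NS = ∅ := Finset.card_eq_zero.mp hn0
      rw [h2] at h1
      exact Finset.subset_empty.mp h1
    have hfull : ∀ x ∈ X \ S', (d x).card = q := by
      by_contra h
      push_neg at h
      obtain ⟨x, hx, hxq⟩ := h
      have hSsum0 : ∑ x ∈ S', (d x).card = 0 := by
        rw [hv, Finset.sum_singleton, hdv]; simp
      have htot : ∑ x ∈ X \ S', (d x).card = q * (q - 1) := by omega
      have hlt : ∑ x ∈ X \ S', (d x).card < ∑ _x ∈ X \ S', q :=
        Finset.sum_lt_sum (fun x _ => hdq x) ⟨x, hx, lt_of_le_of_ne (hdq x) hxq⟩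
      rw [Finset.sum_const, smul_eq_mul, Finset.card_sdiff_of_subset hS'X, hX, ← hs, hs1,
        Nat.mul_comm, htot] at hlt
      omega
    refine ⟨v, Finset.mem_union_left _ hvX, ?_, ?_⟩
    · intro w hw
      rcases hbip v w hw with ⟨-, hwY⟩ | ⟨hvY, -⟩
      · have : w ∈ d v := Finset.mem_filter.mpr ⟨hwY, hw⟩
        rw [hdv] at this; exact absurd this (Finset.notMem_empty w)
      · exact Finset.disjoint_left.mp hdisj hvX hvY
    · intro x hxX y hyY hxv _
      have hx' : x ∈ X \ S' := by
        rw [Finset.mem_sdiff, hv, Finset.mem_singleton]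
        exact ⟨hxX, hxv⟩
      have : d x = Y := Finset.eq_of_subset_of_card_le (hdY x) (by rw [hfull x hx', hY])
      have hy : y ∈ d x := this ▸ hyY
      exact (Finset.mem_filter.mp hy).2
  · -- case s = q : isolated vertex in Y
    have hSX : S' = X :=
      Finset.eq_of_subset_of_card_le hS'X (by rw [hX, ← hs, hsq'])
    have hNSY : NS ⊆ Y := by
      intro y hy
      rw [hNS, Finset.mem_biUnion] at hy
      obtain ⟨x, -, hy⟩ := hy
      exact hdY _ hy
    have hfull : ∀ x ∈ X, (d x).card = q - 1 := by
      by_contra h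
      push_neg at h
      obtain ⟨x, hx, hxq⟩ := h
      have hle : ∀ x ∈ X, (d x).card ≤ q - 1 := fun x hx => by
        rw [← hnq, hn]
        exact Finset.card_le_card (hsub x (hSX ▸ hx))
      have hlt : ∑ x ∈ X, (d x).card < ∑ _x ∈ X, (q - 1) :=
        Finset.sum_lt_sum hle ⟨x, hx, lt_of_le_of_ne (hle x hx) hxq⟩
      rw [Finset.sum_const, smul_eq_mul, hX, hsum] at hlt
      omega
    obtain ⟨v, hvY, hvNS⟩ : ∃ v ∈ Y, v ∉ NS := by
      by_contra h
      push_neg at h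
      have : Y ⊆ NS := h
      have := Finset.card_le_card this
      omega
    have hNSerase : NS = Y.erase v := by
      apply Finset.eq_of_subset_of_card_le
      · intro y hy
        exact Finset.mem_erase.mpr ⟨fun h => hvNS (h ▸ hy), hNSY hy⟩
      · rw [Finset.card_erase_of_mem hvY, hY, ← hn, hnq]
    refine ⟨v, Finset.mem_union_right _ hvY, ?_, ?_⟩
    · intro w hw
      rcases hbip v w hw with ⟨hvX, -⟩ | ⟨-, hwX⟩
      · exact Finset.disjoint_left.mp hdisj hvX hvY
      · have : v ∈ d w := Finset.mem_filter.mpr ⟨hvY, hw.symm⟩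
        exact hvNS (hsub w (hSX ▸ hwX) this)
    · intro x hxX y hyY _ hyv
      have hdx : d x = NS :=
        Finset.eq_of_subset_of_card_le (hsub x (hSX ▸ hxX))
          (by rw [hfull x hxX, ← hn, hnq])
      have : y ∈ d x := by
        rw [hdx, hNSerase]
        exact Finset.mem_erase.mpr ⟨hyv, hyY⟩
      exact (Finset.mem_filter.mp this).2
end

section
/- Let G₁, G₂, G₃ be simple graphs on the same vertex set V that are rainbow-triangle-free, and let Z ⊆ V be a set of three vertices with edge set T = {all three pairs in Z}. Then |G₁ ∩ T| + |G₂ ∩ T| + |G₃ ∩ T| ≤ 6, where |G_i ∩ T| counts the pairs in Z that are edges of G_i. -/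
set_option maxHeartbeats 2000000


theorem stmt_8 {V : Type*} (G₁ G₂ G₃ : SimpleGraph V)
    [DecidableRel G₁.Adj] [DecidableRel G₂.Adj] [DecidableRel G₃.Adj]
    (hRBT : RainbowTriangleFree ![G₁, G₂, G₃])
    (a b c : V) (hab : a ≠ b) (hbc : b ≠ c) (hac : a ≠ c) :
    ((if G₁.Adj a b then 1 else 0) + (if G₁.Adj b c then 1 else 0) +
        (if G₁.Adj a c then 1 else 0)) +
      ((if G₂.Adj a b then 1 else 0) + (if G₂.Adj b c then 1 else 0) +
        (if G₂.Adj a c then 1 else 0)) +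
      ((if G₃.Adj a b then 1 else 0) + (if G₃.Adj b c then 1 else 0) +
        (if G₃.Adj a c then 1 else 0)) ≤ 6 := by
  have h := fun i j k hij hjk hik => hRBT i j k hij hjk hik a b c
  have h0 : ∀ i : Fin 3, (![G₁, G₂, G₃] i) = ![G₁, G₂, G₃] i := fun _ => rfl
  have h123 := h 0 1 2 (by decide) (by decide) (by decide)
  have h132 := h 0 2 1 (by decide) (by decide) (by decide)
  have h213 := h 1 0 2 (by decide) (by decide) (by decide)
  have h231 := h 1 2 0 (by decide) (by decide) (by decide)
  have h312 := h 2 0 1 (by decide) (by decide) (by decide)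
  have h321 := h 2 1 0 (by decide) (by decide) (by decide)
  simp only [Matrix.cons_val_zero, Matrix.cons_val_one, Matrix.head_cons,
    Matrix.cons_val_two, Matrix.tail_cons] at h123 h132 h213 h231 h312 h321
  split_ifs <;>
    first
      | omega
      | exact (h123 ⟨by assumption, by assumption, by assumption⟩).elim
      | exact (h132 ⟨by assumption, by assumption, by assumption⟩).elim
      | exact (h213 ⟨by assumption, by assumption, by assumption⟩).elim
      | exact (h231 ⟨by assumption, by assumption, by assumption⟩).elim
      | exact (h312 ⟨by assumption, by assumption, by assumption⟩).elim
      | exact (h321 ⟨by assumption, by assumption, by assumption⟩).elim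
end

section
/- Let B, C, D be simple graphs on the same vertex set V that are rainbow-triangle-free, let E₁, …, E_ℓ be pairwise disjoint edges of B, set W = E₁ ∪ ⋯ ∪ E_ℓ, and fix x ∈ V \ W. Then d_C(x, W) + d_D(x, W) ≤ 2ℓ, where d_G(x, W) denotes the number of w ∈ W with {x, w} an edge of G. -/
theorem stmt_11 {V : Type*} [Fintype V] (B C D : SimpleGraph V)
    (hRBT : RainbowTriangleFree ![B, C, D])
    (ℓ : ℕ) (e : Fin ℓ → Sym2 V)
    (he : ∀ i, e i ∈ B.edgeSet)
    (hdisj : ∀ i j : Fin ℓ, i ≠ j → ∀ v : V, v ∈ e i → v ∉ e j)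
    (x : V) (hx : ∀ i, x ∉ e i) :
    {w : V | (∃ i, w ∈ e i) ∧ C.Adj x w}.ncard +
      {w : V | (∃ i, w ∈ e i) ∧ D.Adj x w}.ncard ≤ 2 * ℓ := by
  classical
  -- any two distinct vertices of an edge e i are B-adjacent
  have hB : ∀ i : Fin ℓ, ∀ w w' : V, w ∈ e i → w' ∈ e i → w ≠ w' → B.Adj w w' := by
    intro i w w' hw hw' hne
    have h1 : e i = s(w, w') := ((Sym2.mem_and_mem_iff hne).mp ⟨hw, hw'⟩)
    have h2 := he i
    rw [h1] at h2
    exact (SimpleGraph.mem_edgeSet B).mp h2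
  set AC : Fin ℓ → Finset V :=
    fun i => Finset.univ.filter (fun w => w ∈ e i ∧ C.Adj x w) with hAC
  set AD : Fin ℓ → Finset V :=
    fun i => Finset.univ.filter (fun w => w ∈ e i ∧ D.Adj x w) with hAD
  have hsetC : {w : V | (∃ i, w ∈ e i) ∧ C.Adj x w} = ↑(Finset.univ.biUnion AC) := by
    ext w
    simp only [Set.mem_setOf_eq, Finset.coe_biUnion, Set.mem_iUnion, Finset.mem_coe,
      Finset.mem_filter, Finset.mem_univ, true_and, hAC]
    constructor
    · rintro ⟨⟨i, hi⟩, hC⟩; exact ⟨i, by simp, hi, hC⟩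
    · rintro ⟨i, _, hi, hC⟩; exact ⟨⟨i, hi⟩, hC⟩
  have hsetD : {w : V | (∃ i, w ∈ e i) ∧ D.Adj x w} = ↑(Finset.univ.biUnion AD) := by
    ext w
    simp only [Set.mem_setOf_eq, Finset.coe_biUnion, Set.mem_iUnion, Finset.mem_coe,
      Finset.mem_filter, Finset.mem_univ, true_and, hAD]
    constructor
    · rintro ⟨⟨i, hi⟩, hC⟩; exact ⟨i, by simp, hi, hC⟩
    · rintro ⟨i, _, hi, hC⟩; exact ⟨⟨i, hi⟩, hC⟩
  have hdC : ∀ i ∈ Finset.univ, ∀ j ∈ Finset.univ, i ≠ j → Disjoint (AC i) (AC j) := by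
    intro i _ j _ hij
    refine Finset.disjoint_left.mpr ?_
    intro w hwi hwj
    simp only [hAC, Finset.mem_filter] at hwi hwj
    exact hdisj i j hij w hwi.2.1 hwj.2.1
  have hdD : ∀ i ∈ Finset.univ, ∀ j ∈ Finset.univ, i ≠ j → Disjoint (AD i) (AD j) := by
    intro i _ j _ hij
    refine Finset.disjoint_left.mpr ?_
    intro w hwi hwj
    simp only [hAD, Finset.mem_filter] at hwi hwj
    exact hdisj i j hij w hwi.2.1 hwj.2.1
  rw [hsetC, hsetD, Set.ncard_coe_finset, Set.ncard_coe_finset,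
    Finset.card_biUnion hdC, Finset.card_biUnion hdD, ← Finset.sum_add_distrib]
  -- per-edge bound
  have key : ∀ i : Fin ℓ, (AC i).card + (AD i).card ≤ 2 := by
    intro i
    -- no w ∈ AC i, w' ∈ AD i with w ≠ w'
    have hcross : ∀ w ∈ AC i, ∀ w' ∈ AD i, w = w' := by
      intro w hw w' hw'
      simp only [hAC, hAD, Finset.mem_filter] at hw hw'
      by_contra hne
      have hBww' : B.Adj w w' := hB i w w' hw.2.1 hw'.2.1 hne
      exact hRBT 1 2 0 (by decide) (by decide) (by decide) w x w'
        ⟨by simpa using hw.2.2.symm, by simpa using hw'.2.2, by simpa using hBww'⟩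
    -- AC i has at most 2 elements (subset of the two endpoints)
    obtain ⟨⟨u, v⟩, huv⟩ := Quot.exists_rep (e i)
    have hsub : ∀ S ∈ [AC i, AD i], S ⊆ {u, v} := by
      intro S hS w hw
      have : w ∈ e i := by
        rcases List.mem_pair.mp hS with h | h <;> subst h <;>
          · simp only [hAC, hAD, Finset.mem_filter] at hw; exact hw.2.1
      rw [← huv] at this
      simpa using this
    rcases (AD i).eq_empty_or_nonempty with h | ⟨w', hw'⟩
    · rw [h, Finset.card_empty, add_zero]
      calc (AC i).card ≤ ({u, v} : Finset V).card :=
            Finset.card_le_card (hsub _ (by simp))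
        _ ≤ 2 := Finset.card_insert_le _ _ |>.trans (by simp)
    rcases (AC i).eq_empty_or_nonempty with h | ⟨w, hw⟩
    · rw [h, Finset.card_empty, zero_add]
      calc (AD i).card ≤ ({u, v} : Finset V).card :=
            Finset.card_le_card (hsub _ (by simp))
        _ ≤ 2 := Finset.card_insert_le _ _ |>.trans (by simp)
    · have hACsub : AC i ⊆ {w'} := fun a ha => by
        simp [hcross a ha w' hw']
      have hADsub : AD i ⊆ {w} := fun a ha => by
        simp [(hcross w hw a ha).symm]
      calc (AC i).card + (AD i).card ≤ 1 + 1 := by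
            gcongr
            · exact (Finset.card_le_card hACsub).trans (by simp)
            · exact (Finset.card_le_card hADsub).trans (by simp)
        _ ≤ 2 := by norm_num
  calc (∑ i, ((AC i).card + (AD i).card)) ≤ ∑ _i : Fin ℓ, 2 :=
        Finset.sum_le_sum fun i _ => key i
    _ = 2 * ℓ := by simp [mul_comm]
end

section
/- Let B, C, D be simple graphs on the same vertex set V with |V| = n that are rainbow-triangle-free, and suppose B is nearly matchable, i.e., B contains a matching of some size ℓ with 2ℓ ≥ n − 2. Then |C| + |D| ≤ 2·⌊n²/4⌋. -/
/-!
Let `W` be the set of vertices covered by the matching of `B` and `k = n - |W| ≤ 2`. For a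
`B`-edge `xy` and any vertex `v`, rainbow-triangle-freeness forbids `vx ∈ C, vy ∈ D` and
`vy ∈ C, vx ∈ D`, so `v` sends at most two `C`- and `D`-edges to `{x, y}`; summing over the
matching, `v` sends at most `|W|` of them to `W`. Splitting the degree sums of `C` and `D` at `W`
gives `2(|C| + |D|) ≤ (n + k)|W| + 2k(k - 1)`, which for `|W| = n - k` even and `k ≤ 2` is at most
`4⌊n²/4⌋`.
-/

open Finset SimpleGraph

theorem RainbowTriangleFree.not_adj {V : Type*} {B C D : SimpleGraph V}
    (h : RainbowTriangleFree ![B, C, D]) {a b c : V} (hab : B.Adj a b) (hbc : C.Adj b c) :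
    ¬D.Adj a c :=
  fun hac => h 0 1 2 (by decide) (by decide) (by decide) a b c ⟨hab, hbc, hac⟩

theorem Finset.card_inter_pair_add_card_inter_pair_le {α : Type*} [DecidableEq α]
    {P Q : Finset α} {x y : α} (hxy : x ≠ y) (h₁ : ¬(x ∈ P ∧ y ∈ Q)) (h₂ : ¬(y ∈ P ∧ x ∈ Q)) :
    #(P ∩ {x, y}) + #(Q ∩ {x, y}) ≤ #{x, y} := by
  rw [card_pair hxy]
  by_cases hx : x ∈ P <;> by_cases hy : y ∈ P <;> by_cases hx' : x ∈ Q <;> by_cases hy' : y ∈ Q <;>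
    simp_all [inter_insert_of_mem, inter_insert_of_notMem]

theorem Finset.card_inter_biUnion_add_card_inter_biUnion_le {α ι : Type*} [DecidableEq α]
    {s : Finset ι} {t : ι → Finset α} (hst : (s : Set ι).PairwiseDisjoint t) {P Q : Finset α}
    (h : ∀ i ∈ s, #(P ∩ t i) + #(Q ∩ t i) ≤ #(t i)) :
    #(P ∩ s.biUnion t) + #(Q ∩ s.biUnion t) ≤ #(s.biUnion t) := by
  have hP : (s : Set ι).PairwiseDisjoint (P ∩ t ·) := hst.mono fun _ => inter_subset_right
  have hQ : (s : Set ι).PairwiseDisjoint (Q ∩ t ·) := hst.mono fun _ => inter_subset_right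
  rw [inter_biUnion, inter_biUnion, card_biUnion hP, card_biUnion hQ, card_biUnion hst,
    ← sum_add_distrib]
  exact sum_le_sum h

namespace SimpleGraph

variable {V : Type*} [Fintype V] [DecidableEq V]

theorem sum_card_neighborFinset_inter (G : SimpleGraph V) [DecidableRel G.Adj] (S : Finset V) :
    ∑ v, #(G.neighborFinset v ∩ S) = ∑ u ∈ S, G.degree u := by
  have hrow : ∀ v, G.neighborFinset v ∩ S = S.bipartiteAbove G.Adj v := fun v => by
    ext u; simp [and_comm]
  have hcol : ∀ u, (univ : Finset V).bipartiteBelow G.Adj u = G.neighborFinset u := fun u => by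
    ext v; simp [adj_comm]
  simp_rw [hrow, sum_card_bipartiteAbove_eq_sum_card_bipartiteBelow, hcol,
    card_neighborFinset_eq_degree]

theorem two_mul_card_edgeFinset_le (G : SimpleGraph V) [DecidableRel G.Adj] (W : Finset V) :
    2 * #G.edgeFinset ≤ ∑ v, #(G.neighborFinset v ∩ W) + ∑ u ∈ Wᶜ, #(G.neighborFinset u ∩ W)
      + #Wᶜ * (#Wᶜ - 1) := by
  have hsplit : ∀ v, G.degree v = #(G.neighborFinset v ∩ W) + #(G.neighborFinset v ∩ Wᶜ) :=
    fun v => by rw [← card_neighborFinset_eq_degree, ← card_union_of_disjoint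
      (disjoint_compl_right.mono inter_subset_right inter_subset_right), ← inter_union_distrib_left,
      union_compl, inter_univ]
  have hout : ∀ u ∈ Wᶜ, #(G.neighborFinset u ∩ Wᶜ) ≤ #Wᶜ - 1 := fun u hu => by
    rw [← card_erase_of_mem hu]
    exact card_le_card fun w hw => mem_erase.2
      ⟨((G.mem_neighborFinset u w).1 (mem_inter.1 hw).1).ne', (mem_inter.1 hw).2⟩
  calc 2 * #G.edgeFinset = ∑ v, G.degree v := (G.sum_degrees_eq_twice_card_edges).symm
    _ = ∑ v, #(G.neighborFinset v ∩ W) + ∑ u ∈ Wᶜ, G.degree u := by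
      rw [← G.sum_card_neighborFinset_inter Wᶜ, ← sum_add_distrib]
      exact sum_congr rfl fun v _ => hsplit v
    _ ≤ ∑ v, #(G.neighborFinset v ∩ W) + ∑ u ∈ Wᶜ, (#(G.neighborFinset u ∩ W) + (#Wᶜ - 1)) := by
      gcongr with u hu
      exact (hsplit u).le.trans (Nat.add_le_add_left (hout u hu) _)
    _ = _ := by rw [sum_add_distrib, sum_const, smul_eq_mul, add_assoc]

theorem two_mul_card_edgeFinset_add_le (C D : SimpleGraph V) [DecidableRel C.Adj]
    [DecidableRel D.Adj] (W : Finset V)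
    (hW : ∀ v, #(C.neighborFinset v ∩ W) + #(D.neighborFinset v ∩ W) ≤ #W) :
    2 * (#C.edgeFinset + #D.edgeFinset) ≤
      (Fintype.card V + #Wᶜ) * #W + 2 * (#Wᶜ * (#Wᶜ - 1)) := by
  have hall : ∑ v, (#(C.neighborFinset v ∩ W) + #(D.neighborFinset v ∩ W)) ≤
      Fintype.card V * #W := by
    simpa using sum_le_sum fun v (_ : v ∈ univ) => hW v
  have hout : ∑ u ∈ Wᶜ, (#(C.neighborFinset u ∩ W) + #(D.neighborFinset u ∩ W)) ≤ #Wᶜ * #W := by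
    simpa using sum_le_sum fun u (_ : u ∈ Wᶜ) => hW u
  rw [sum_add_distrib] at hall hout
  linarith [C.two_mul_card_edgeFinset_le W, D.two_mul_card_edgeFinset_le W]

theorem card_inter_toFinset_add_card_inter_toFinset_le {B C D : SimpleGraph V}
    [DecidableRel C.Adj] [DecidableRel D.Adj] (hRBT : RainbowTriangleFree ![B, C, D])
    {z : Sym2 V} (hz : z ∈ B.edgeSet) (v : V) :
    #(C.neighborFinset v ∩ z.toFinset) + #(D.neighborFinset v ∩ z.toFinset) ≤ #z.toFinset := by
  induction z with
  | h x y =>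
    rw [Sym2.toFinset_mk_eq]
    have hxy : B.Adj x y := hz
    refine card_inter_pair_add_card_inter_pair_le hxy.ne ?_ ?_ <;>
      simp only [mem_neighborFinset] <;> rintro ⟨hC, hD⟩
    · exact hRBT.not_adj hxy.symm hC.symm hD.symm
    · exact hRBT.not_adj hxy hC.symm hD.symm

end SimpleGraph

theorem Nat.two_mul_add_mul_le_four_mul_sq_div_four (ℓ k : ℕ) (hk : k ≤ 2) :
    (2 * ℓ + k + k) * (2 * ℓ) + 2 * (k * (k - 1)) ≤ 4 * ((2 * ℓ + k) ^ 2 / 4) := by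
  interval_cases k <;> ring_nf <;> omega

theorem stmt_12_general {V : Type*} [Fintype V] [DecidableEq V] (n : ℕ) (hV : Fintype.card V = n)
    (B C D : SimpleGraph V)
    [DecidableRel C.Adj] [DecidableRel D.Adj]
    (hRBT : RainbowTriangleFree ![B, C, D])
    (hnm : ∃ (ℓ : ℕ) (e : Fin ℓ → Sym2 V), (∀ i, e i ∈ B.edgeSet) ∧
      (∀ i j : Fin ℓ, i ≠ j → ∀ v : V, v ∈ e i → v ∉ e j) ∧ n - 2 ≤ 2 * ℓ) :
    C.edgeFinset.card + D.edgeFinset.card ≤ 2 * (n ^ 2 / 4) := by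
  obtain ⟨ℓ, e, he, hdisj, hℓ⟩ := hnm
  set W := univ.biUnion fun i => (e i).toFinset
  have hW : ((univ : Finset (Fin ℓ)) : Set (Fin ℓ)).PairwiseDisjoint fun i => (e i).toFinset :=
    fun i _ j _ hij => disjoint_left.2 fun v hi hj =>
      hdisj i j hij v (Sym2.mem_toFinset.1 hi) (Sym2.mem_toFinset.1 hj)
  have hWcard : #W = 2 * ℓ := by
    rw [card_biUnion hW, sum_congr rfl fun i _ =>
      Sym2.card_toFinset_of_not_isDiag _ (B.not_isDiag_of_mem_edgeSet (he i))]
    simp [mul_comm]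
  have hWc : 2 * ℓ + #Wᶜ = n := by
    rw [card_compl, ← hWcard, ← hV, Nat.add_sub_cancel' (card_le_univ W)]
  have hcount := two_mul_card_edgeFinset_add_le C D W fun v =>
    card_inter_biUnion_add_card_inter_biUnion_le hW fun i _ =>
      card_inter_toFinset_add_card_inter_toFinset_le hRBT (he i) v
  have harith := Nat.two_mul_add_mul_le_four_mul_sq_div_four ℓ #Wᶜ (by omega)
  rw [hWcard, hV, ← hWc] at hcount
  rw [← hWc]
  omega

theorem stmt_12 {V : Type*} [Fintype V] [DecidableEq V] (n : ℕ) (hV : Fintype.card V = n)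
    (B C D : SimpleGraph V)
    [DecidableRel B.Adj] [DecidableRel C.Adj] [DecidableRel D.Adj]
    (hRBT : RainbowTriangleFree ![B, C, D])
    (hnm : ∃ (ℓ : ℕ) (e : Fin ℓ → Sym2 V), (∀ i, e i ∈ B.edgeSet) ∧
      (∀ i j : Fin ℓ, i ≠ j → ∀ v : V, v ∈ e i → v ∉ e j) ∧ n - 2 ≤ 2 * ℓ) :
    C.edgeFinset.card + D.edgeFinset.card ≤ 2 * (n ^ 2 / 4) :=
  stmt_12_general n hV B C D hRBT hnm
end

section
/- Let B, C, D be simple graphs on the same vertex set V with |V| = n that are rainbow-triangle-free, and suppose B is triangle-free. Then 2|B| + |C| + |D| ≤ 4·⌊n²/4⌋. -/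
namespace Stmt13Aux

open Finset

set_option linter.unusedSectionVars false

variable {V : Type*} [Fintype V] [DecidableEq V]

/-- Edge-indicator weight. -/
def ew (G : SimpleGraph V) [DecidableRel G.Adj] (x y : V) : ℕ :=
  if G.Adj x y then 1 else 0

lemma ew_comm (G : SimpleGraph V) [DecidableRel G.Adj] (x y : V) :
    ew G x y = ew G y x := by
  simp [ew, SimpleGraph.adj_comm]

lemma ew_self (G : SimpleGraph V) [DecidableRel G.Adj] (x : V) : ew G x x = 0 := by
  simp [ew]

lemma ew_le_one (G : SimpleGraph V) [DecidableRel G.Adj] (x y : V) : ew G x y ≤ 1 := by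
  unfold ew; split <;> omega

/-- Twice the number of edges inside `s`, as a double sum. -/
def P (G : SimpleGraph V) [DecidableRel G.Adj] (s : Finset V) : ℕ :=
  ∑ x ∈ s, ∑ y ∈ s, ew G x y

lemma P_univ (G : SimpleGraph V) [DecidableRel G.Adj] :
    P G Finset.univ = 2 * G.edgeFinset.card := by
  unfold P
  have h : ∀ x : V, ∑ y ∈ Finset.univ, ew G x y = G.degree x := by
    intro x
    rw [← SimpleGraph.card_neighborFinset_eq_degree, SimpleGraph.neighborFinset_eq_filter,
      Finset.card_filter]
    rfl
  simp only [h]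
  exact G.sum_degrees_eq_twice_card_edges

lemma P_insert2 (G : SimpleGraph V) [DecidableRel G.Adj] {u v : V} {s' : Finset V}
    (hu : u ∉ insert v s') (hv : v ∉ s') :
    P G (insert u (insert v s')) =
      P G s' + 2 * (∑ w ∈ s', ew G u w) + 2 * (∑ w ∈ s', ew G v w) + 2 * ew G u v := by
  have expand : ∀ x, ∑ y ∈ insert u (insert v s'), ew G x y
      = ew G x u + (ew G x v + ∑ y ∈ s', ew G x y) := by
    intro x; rw [sum_insert hu, sum_insert hv]
  unfold P
  rw [sum_insert hu, sum_insert hv]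
  simp only [expand]
  rw [Finset.sum_add_distrib, Finset.sum_add_distrib]
  have c1 : ∑ x ∈ s', ew G x u = ∑ w ∈ s', ew G u w :=
    Finset.sum_congr rfl fun x _ => ew_comm G x u
  have c2 : ∑ x ∈ s', ew G x v = ∑ w ∈ s', ew G v w :=
    Finset.sum_congr rfl fun x _ => ew_comm G x v
  rw [c1, c2, ew_self, ew_self, ew_comm G v u]
  ring

lemma pair_bound {G1 G2 : SimpleGraph V} [DecidableRel G1.Adj] [DecidableRel G2.Adj]
    {u v : V} (s' : Finset V)
    (h : ∀ w ∈ s', ¬(G1.Adj u w ∧ G2.Adj v w)) :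
    (∑ w ∈ s', ew G1 u w) + (∑ w ∈ s', ew G2 v w) ≤ s'.card := by
  rw [← Finset.sum_add_distrib]
  calc ∑ w ∈ s', (ew G1 u w + ew G2 v w) ≤ ∑ _w ∈ s', 1 := by
        apply Finset.sum_le_sum
        intro w hw
        have hw' := h w hw
        unfold ew
        split_ifs <;> simp_all
    _ = s'.card := by simp

lemma div_step (k : ℕ) : (k + 2) ^ 2 / 4 = k ^ 2 / 4 + (k + 1) := by
  have h : (k + 2) ^ 2 = k ^ 2 + 4 * (k + 1) := by ring
  rw [h, Nat.add_mul_div_left _ _ (by norm_num : (0:ℕ) < 4)]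

lemma mantel_bound (k : ℕ) : k * (k - 1) ≤ 4 * (k ^ 2 / 4) := by
  obtain ⟨m, rfl | rfl⟩ := Nat.even_or_odd' k
  · have h : (2 * m) ^ 2 / 4 = m ^ 2 := by
      rw [show (2 * m) ^ 2 = 4 * m ^ 2 by ring, Nat.mul_div_cancel_left _ (by norm_num)]
    rw [h]
    nlinarith [Nat.sub_le (2 * m) 1, Nat.mul_le_mul_left (2 * m) (Nat.sub_le (2 * m) 1)]
  · have h : (2 * m + 1) ^ 2 / 4 = m ^ 2 + m := by
      rw [show (2 * m + 1) ^ 2 = 4 * (m ^ 2 + m) + 1 by ring,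
        Nat.mul_add_div (by norm_num)]
      omega
    rw [h]
    have : (2 * m + 1) - 1 = 2 * m := by omega
    rw [this]
    nlinarith

lemma aux (B C D : SimpleGraph V)
    [DecidableRel B.Adj] [DecidableRel C.Adj] [DecidableRel D.Adj]
    (hR : ∀ a b c : V, ¬(B.Adj a b ∧ C.Adj b c ∧ D.Adj a c))
    (htf : B.CliqueFree 3) :
    ∀ m : ℕ, ∀ s : Finset V, s.card ≤ m →
      2 * P B s + P C s + P D s ≤ 8 * (s.card ^ 2 / 4) := by
  intro m
  induction m with
  | zero =>
    intro s hs
    have : s = ∅ := Finset.card_eq_zero.mp (Nat.le_zero.mp hs)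
    subst this
    simp [P]
  | succ m ih =>
    intro s hs
    by_cases hedge : ∃ u ∈ s, ∃ v ∈ s, B.Adj u v
    · obtain ⟨u, hu, v, hv, hB⟩ := hedge
      have huv : u ≠ v := hB.ne
      set s' := (s.erase u).erase v with hs'
      have hvs' : v ∉ s' := Finset.notMem_erase _ _
      have h1 : insert v s' = s.erase u :=
        Finset.insert_erase (Finset.mem_erase.mpr ⟨huv.symm, hv⟩)
      have hus' : u ∉ insert v s' := by rw [h1]; exact Finset.notMem_erase _ _
      have hs_eq : insert u (insert v s') = s := by rw [h1, Finset.insert_erase hu]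
      have hcard : s.card = s'.card + 2 := by
        rw [← hs_eq, Finset.card_insert_of_notMem hus', Finset.card_insert_of_notMem hvs']
      -- degree bounds
      have hBB : (∑ w ∈ s', ew B u w) + (∑ w ∈ s', ew B v w) ≤ s'.card := by
        apply pair_bound
        intro w _ ⟨h1', h2'⟩
        exact htf {u, v, w} (SimpleGraph.is3Clique_triple_iff.mpr ⟨hB, h1', h2'⟩)
      have hCD : (∑ w ∈ s', ew C u w) + (∑ w ∈ s', ew D v w) ≤ s'.card := by
        apply pair_bound
        intro w _ ⟨h1', h2'⟩
        exact hR v u w ⟨hB.symm, h1', h2'⟩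
      have hDC : (∑ w ∈ s', ew D u w) + (∑ w ∈ s', ew C v w) ≤ s'.card := by
        apply pair_bound
        intro w _ ⟨h1', h2'⟩
        exact hR u v w ⟨hB, h2', h1'⟩
      have hIH : 2 * P B s' + P C s' + P D s' ≤ 8 * (s'.card ^ 2 / 4) := by
        apply ih
        omega
      have eB := P_insert2 B hus' hvs'
      have eC := P_insert2 C hus' hvs'
      have eD := P_insert2 D hus' hvs'
      rw [hs_eq] at eB eC eD
      have hewB : ew B u v = 1 := by simp [ew, hB]
      have hewC : ew C u v ≤ 1 := ew_le_one C u v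
      have hewD : ew D u v ≤ 1 := ew_le_one D u v
      have hdiv : s.card ^ 2 / 4 = s'.card ^ 2 / 4 + (s'.card + 1) := by
        rw [hcard]; exact div_step s'.card
      rw [hdiv]
      omega
    · push_neg at hedge
      have hPB : P B s = 0 := by
        apply Finset.sum_eq_zero
        intro x hx
        apply Finset.sum_eq_zero
        intro y hy
        simp only [ew, if_neg (hedge x hx y hy)]
      have hrow : ∀ (G : SimpleGraph V) (_ : DecidableRel G.Adj),
          P G s ≤ s.card * (s.card - 1) := by
        intro G instG
        unfold P
        calc ∑ x ∈ s, ∑ y ∈ s, ew G x y ≤ ∑ _x ∈ s, (s.card - 1) := by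
              apply Finset.sum_le_sum
              intro x hx
              have h1 : ∑ y ∈ s, ew G x y = (s.filter (G.Adj x)).card := by
                rw [Finset.card_filter]; rfl
              rw [h1]
              have h2 : s.filter (G.Adj x) ⊆ s.erase x := by
                intro y hy
                rw [Finset.mem_filter] at hy
                exact Finset.mem_erase.mpr ⟨hy.2.ne', hy.1⟩
              calc (s.filter (G.Adj x)).card ≤ (s.erase x).card := Finset.card_le_card h2
                _ = s.card - 1 := Finset.card_erase_of_mem hx
          _ = s.card * (s.card - 1) := by rw [Finset.sum_const, smul_eq_mul]
      have hC := hrow C (by infer_instance)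
      have hD := hrow D (by infer_instance)
      have hM := mantel_bound s.card
      omega

end Stmt13Aux

theorem stmt_13 {V : Type*} [Fintype V] [DecidableEq V] (n : ℕ) (hV : Fintype.card V = n)
    (B C D : SimpleGraph V)
    [DecidableRel B.Adj] [DecidableRel C.Adj] [DecidableRel D.Adj]
    (hRBT : RainbowTriangleFree ![B, C, D])
    (htf : B.CliqueFree 3) :
    2 * B.edgeFinset.card + C.edgeFinset.card + D.edgeFinset.card ≤ 4 * (n ^ 2 / 4) := by
  have hR : ∀ a b c : V, ¬(B.Adj a b ∧ C.Adj b c ∧ D.Adj a c) := by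
    intro a b c
    have h := hRBT 0 1 2 (by decide) (by decide) (by decide) a b c
    simpa using h
  have h := Stmt13Aux.aux B C D hR htf Finset.univ.card Finset.univ le_rfl
  rw [Stmt13Aux.P_univ, Stmt13Aux.P_univ, Stmt13Aux.P_univ, Finset.card_univ, hV] at h
  have hgoal : 2 * (2 * B.edgeFinset.card) + 2 * C.edgeFinset.card + 2 * D.edgeFinset.card
      ≤ 8 * (n ^ 2 / 4) := h
  omega
end

section
/- Let B be a triangle-free simple graph on a vertex set V partitioned as V = X ⊔ Y ⊔ Z with X = {x₁, …, x_ℓ}, Y = {y₁, …, y_ℓ} such that {x_i, y_i} is an edge of B for each 1 ≤ i ≤ ℓ, every neighbor in B of a vertex of Z lies in X, and ν(B) = ℓ. Let p be the maximum, over x ∈ X, of the number of z ∈ Z with {x, z} an edge of B. Then |B| ≤ ℓ² + ℓp. -/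
open Classical in
noncomputable def pickIdx {V : Type*} {ℓ : ℕ} [Nonempty (Fin ℓ)] (x y : Fin ℓ → V) (v : V) :
    Fin ℓ :=
  if h : ∃ i, x i = v then h.choose
  else if h' : ∃ i, y i = v then h'.choose
  else Classical.arbitrary _

lemma pickIdx_x {V : Type*} {ℓ : ℕ} [Nonempty (Fin ℓ)] {x y : Fin ℓ → V}
    (hxinj : Function.Injective x) (i : Fin ℓ) : pickIdx x y (x i) = i := by
  have h : ∃ j, x j = x i := ⟨i, rfl⟩
  rw [pickIdx, dif_pos h]
  exact hxinj h.choose_spec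

lemma pickIdx_y {V : Type*} {ℓ : ℕ} [Nonempty (Fin ℓ)] {x y : Fin ℓ → V}
    (hyinj : Function.Injective y) (hxy : ∀ i j : Fin ℓ, x i ≠ y j) (i : Fin ℓ) :
    pickIdx x y (y i) = i := by
  have h : ¬ ∃ j, x j = y i := by rintro ⟨j, hj⟩; exact hxy j i hj
  have h' : ∃ j, y j = y i := ⟨i, rfl⟩
  rw [pickIdx, dif_neg h, dif_pos h']
  exact hyinj h'.choose_spec

open Classical in
noncomputable def encE {V : Type*} {ℓ : ℕ} [Nonempty (Fin ℓ)] (x y : Fin ℓ → V) (Z : Set V)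
    (e : Sym2 V) : (Fin ℓ × Fin ℓ) ⊕ ((_ : Fin ℓ) × V) :=
  if e.out.1 ∈ Z then Sum.inr ⟨pickIdx x y e.out.2, e.out.1⟩
  else if e.out.2 ∈ Z then Sum.inr ⟨pickIdx x y e.out.1, e.out.2⟩
  else
    if x (min (pickIdx x y e.out.1) (pickIdx x y e.out.2)) = e.out.1 ∨
        x (min (pickIdx x y e.out.1) (pickIdx x y e.out.2)) = e.out.2 then
      Sum.inl (min (pickIdx x y e.out.1) (pickIdx x y e.out.2),
        max (pickIdx x y e.out.1) (pickIdx x y e.out.2))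
    else
      Sum.inl (max (pickIdx x y e.out.1) (pickIdx x y e.out.2),
        min (pickIdx x y e.out.1) (pickIdx x y e.out.2))

lemma encE_spec {V : Type*} {ℓ : ℕ} [Nonempty (Fin ℓ)] (B : SimpleGraph V)
    {x y : Fin ℓ → V} (hxinj : Function.Injective x) (hyinj : Function.Injective y)
    (hxy : ∀ i j : Fin ℓ, x i ≠ y j) (Z : Set V)
    (hZ : Z = {v : V | v ∉ Set.range x ∧ v ∉ Set.range y})
    (hZnbr : ∀ z ∈ Z, ∀ w : V, B.Adj z w → w ∈ Set.range x)
    (e : Sym2 V) (he : e ∈ B.edgeSet) :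
    (∀ i z, encE x y Z e = Sum.inr ⟨i, z⟩ → z ∈ Z ∧ B.Adj (x i) z ∧ e = s(x i, z)) ∧
    (∀ k m, encE x y Z e = Sum.inl (k, m) →
      (k = m → e = s(x k, y k)) ∧
      (k < m → ∃ w, (w = x m ∨ w = y m) ∧ B.Adj (x k) w ∧ e = s(x k, w)) ∧
      (m < k → ∃ w, (w = x k ∨ w = y k) ∧ B.Adj (y m) w ∧ e = s(y m, w))) := by
  obtain ⟨a, b, hout⟩ : ∃ a b, e.out = (a, b) := ⟨e.out.1, e.out.2, rfl⟩
  have hmk : s(a, b) = e := by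
    have := Quot.out_eq e
    rw [hout] at this
    exact this
  have hab : B.Adj a b := by rwa [← hmk, SimpleGraph.mem_edgeSet] at he
  have hvnotZ : ∀ v, v ∉ Z → v = x (pickIdx x y v) ∨ v = y (pickIdx x y v) := by
    intro v hv
    rw [hZ] at hv
    simp only [Set.mem_setOf_eq, not_and_or, not_not] at hv
    rcases hv with h | h
    · obtain ⟨i, rfl⟩ := h; left; rw [pickIdx_x hxinj]
    · obtain ⟨i, rfl⟩ := h; right; rw [pickIdx_y hyinj hxy]
  have hZx : ∀ z ∈ Z, ∀ w, B.Adj z w → (w ∉ Z ∧ w = x (pickIdx x y w)) := by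
    intro z hz w hw
    obtain ⟨i, rfl⟩ := hZnbr z hz w hw
    refine ⟨?_, by rw [pickIdx_x hxinj]⟩
    intro hmem
    rw [hZ] at hmem
    exact hmem.1 ⟨i, rfl⟩
  unfold encE
  rw [hout]
  dsimp only
  set i := pickIdx x y a with hi
  set j := pickIdx x y b with hj
  split_ifs with h1 h2 h3
  · -- a ∈ Z
    have hb' := hZx a h1 b hab
    constructor
    · intro i' z hiz
      obtain ⟨h4, h5⟩ : j = i' ∧ a = z := by simpa using hiz
      subst h4; subst h5
      refine ⟨h1, ?_, ?_⟩
      · rw [hj, ← hb'.2]; exact hab.symm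
      · rw [hj, ← hb'.2]; exact hmk.symm.trans Sym2.eq_swap
    · intro k m hkm; simp at hkm
  · -- b ∈ Z, a ∉ Z
    have ha' := hZx b h2 a hab.symm
    constructor
    · intro i' z hiz
      obtain ⟨h4, h5⟩ : i = i' ∧ b = z := by simpa using hiz
      subst h4; subst h5
      refine ⟨h2, ?_, ?_⟩
      · rw [hi, ← ha'.2]; exact hab
      · rw [hi, ← ha'.2]; exact hmk.symm
    · intro k m hkm; simp at hkm
  · -- both not in Z, x (min i j) ∈ {a, b}
    have hA := hvnotZ a h1
    have hB := hvnotZ b h2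
    rw [← hi] at hA
    rw [← hj] at hB
    constructor
    · intro i' z hiz; simp at hiz
    · intro k m hkm
      obtain ⟨hk, hm⟩ : min i j = k ∧ max i j = m := by simpa using hkm
      subst hk; subst hm
      refine ⟨?_, ?_, ?_⟩
      · intro heq
        have hij : i = j := inf_eq_sup.mp heq
        rw [hij] at hA
        rw [hij, min_self]
        rcases hA with rfl | rfl <;> rcases hB with h | h
        · exact absurd h hab.ne'
        · rw [← h]; exact hmk.symm
        · rw [Sym2.eq_swap] at hmk
          rw [← h]; exact hmk.symm
        · rw [h] at hab; exact absurd rfl hab.ne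
      · intro _
        rcases h3 with h3 | h3
        · have hmin : i = min i j := by
            conv_lhs => rw [hi, ← h3]
            exact pickIdx_x hxinj _
          have hle : i ≤ j := by rw [hmin]; exact min_le_right _ _
          refine ⟨b, ?_, ?_, ?_⟩
          · rw [max_eq_right hle]; exact hB
          · rw [h3]; exact hab
          · rw [h3]; exact hmk.symm
        · have hmin : j = min i j := by
            conv_lhs => rw [hj, ← h3]
            exact pickIdx_x hxinj _
          have hle : j ≤ i := by rw [hmin]; exact min_le_left _ _
          refine ⟨a, ?_, ?_, ?_⟩
          · rw [max_eq_left hle]; exact hA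
          · rw [h3]; exact hab.symm
          · rw [h3]; exact hmk.symm.trans Sym2.eq_swap
      · intro hlt
        exact absurd (min_le_max (a := i) (b := j)) (not_le.mpr hlt)
  · -- both not in Z, x (min i j) ∉ {a, b}
    push_neg at h3
    have hA := hvnotZ a h1
    have hB := hvnotZ b h2
    rw [← hi] at hA
    rw [← hj] at hB
    constructor
    · intro i' z hiz; simp at hiz
    · intro k m hkm
      obtain ⟨hk, hm⟩ : max i j = k ∧ min i j = m := by simpa using hkm
      subst hk; subst hm
      refine ⟨?_, ?_, ?_⟩
      · intro heq
        have hij : i = j := inf_eq_sup.mp heq.symm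
        rw [hij] at hA h3
        rw [min_self] at h3
        rcases hA with ha | ha
        · exact absurd ha.symm h3.1
        · rcases hB with hb | hb
          · exact absurd hb.symm h3.2
          · rw [ha, hb] at hab; exact absurd rfl hab.ne
      · intro hlt
        exact absurd (min_le_max (a := i) (b := j)) (not_le.mpr hlt)
      · intro hlt
        rcases le_total i j with hle | hle
        · have hmin : min i j = i := min_eq_left hle
          have hmax : max i j = j := max_eq_right hle
          rw [hmin] at h3 ⊢
          rw [hmax]
          have ha : a = y i := by
            rcases hA with ha | ha
            · exact absurd ha.symm h3.1
            · exact ha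
          refine ⟨b, hB, ?_, ?_⟩
          · rw [← ha]; exact hab
          · rw [← ha]; exact hmk.symm
        · have hmin : min i j = j := min_eq_right hle
          have hmax : max i j = i := max_eq_left hle
          rw [hmin] at h3 ⊢
          rw [hmax]
          have hb : b = y j := by
            rcases hB with hb | hb
            · exact absurd hb.symm h3.2
            · exact hb
          refine ⟨a, hA, ?_, ?_⟩
          · rw [← hb]; exact hab.symm
          · rw [← hb]; exact hmk.symm.trans Sym2.eq_swap

theorem stmt_15 {V : Type*} [Fintype V] [DecidableEq V]
    (B : SimpleGraph V) [DecidableRel B.Adj]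
    (htf : B.CliqueFree 3)
    (ℓ : ℕ) (x y : Fin ℓ → V)
    (hxinj : Function.Injective x) (hyinj : Function.Injective y)
    (hxy : ∀ i j : Fin ℓ, x i ≠ y j)
    (Z : Set V) (hZ : Z = {v : V | v ∉ Set.range x ∧ v ∉ Set.range y})
    (hedge : ∀ i : Fin ℓ, B.Adj (x i) (y i))
    (hZnbr : ∀ z ∈ Z, ∀ w : V, B.Adj z w → w ∈ Set.range x)
    (hν : ∀ M : Finset (Sym2 V), IsMatchingFinset B M → M.card ≤ ℓ)
    (p : ℕ)
    (hp : p = Finset.univ.sup fun i : Fin ℓ => {z : V | z ∈ Z ∧ B.Adj (x i) z}.ncard) :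
    B.edgeFinset.card ≤ ℓ ^ 2 + ℓ * p := by
  classical
  rcases Nat.eq_zero_or_pos ℓ with hl0 | hlpos
  · subst hl0
    have hempty : B.edgeFinset = ∅ := by
      ext e
      simp only [Finset.notMem_empty, iff_false, SimpleGraph.mem_edgeFinset]
      induction e with
      | _ a b =>
        intro hmem
        rw [SimpleGraph.mem_edgeSet] at hmem
        have haZ : a ∈ Z := by
          rw [hZ]
          constructor <;> simp
        have := hZnbr a haZ b hmem
        simp at this
    simp [hempty]
  · haveI : Nonempty (Fin ℓ) := ⟨⟨0, hlpos⟩⟩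
    have htri : ∀ (w : V) (i : Fin ℓ), B.Adj w (x i) → B.Adj w (y i) → False := fun w i h1 h2 =>
      htf {w, x i, y i} (SimpleGraph.is3Clique_triple_iff.mpr ⟨h1, h2, hedge i⟩)
    set NZ : Fin ℓ → Finset V :=
      fun i => Set.Finite.toFinset (Set.toFinite {v : V | v ∈ Z ∧ B.Adj (x i) v}) with hNZ
    have hNZcard : ∀ i, (NZ i).card ≤ p := by
      intro i
      rw [hp]
      have hc : (NZ i).card = {v : V | v ∈ Z ∧ B.Adj (x i) v}.ncard :=
        (Set.ncard_eq_toFinset_card _ _).symm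
      rw [hc]
      exact Finset.le_sup (f := fun i : Fin ℓ => {z : V | z ∈ Z ∧ B.Adj (x i) z}.ncard) (Finset.mem_univ i)
    set T : Finset ((Fin ℓ × Fin ℓ) ⊕ ((_ : Fin ℓ) × V)) :=
      (Finset.univ : Finset (Fin ℓ × Fin ℓ)).disjSum (Finset.univ.sigma fun i => NZ i) with hT
    have hmaps : ∀ e ∈ B.edgeFinset, encE x y Z e ∈ T := by
      intro e he
      rcases hE : encE x y Z e with pr | ⟨i, z⟩
      · exact Finset.inl_mem_disjSum.mpr (Finset.mem_univ _)
      · obtain ⟨h1, h2, _⟩ :=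
          (encE_spec B hxinj hyinj hxy Z hZ hZnbr e (SimpleGraph.mem_edgeFinset.mp he)).1 i z hE
        refine Finset.inr_mem_disjSum.mpr ?_
        rw [Finset.mem_sigma]
        exact ⟨Finset.mem_univ _, by rw [hNZ]; simp only [Set.Finite.mem_toFinset]; exact ⟨h1, h2⟩⟩
    have hinj : Set.InjOn (encE x y Z) B.edgeFinset := by
      intro e he e' he' h
      have spec := encE_spec B hxinj hyinj hxy Z hZ hZnbr e
        (SimpleGraph.mem_edgeFinset.mp (by exact_mod_cast he))
      have spec' := encE_spec B hxinj hyinj hxy Z hZ hZnbr e'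
        (SimpleGraph.mem_edgeFinset.mp (by exact_mod_cast he'))
      rcases hE : encE x y Z e with ⟨k, m⟩ | ⟨i, z⟩
      · rw [hE] at h
        have d := spec.2 k m hE
        have d' := spec'.2 k m h.symm
        rcases lt_trichotomy k m with hlt | heq | hgt
        · obtain ⟨w, hw, hadj, hew⟩ := d.2.1 hlt
          obtain ⟨w', hw', hadj', hew'⟩ := d'.2.1 hlt
          have hww : w = w' := by
            rcases hw with rfl | rfl <;> rcases hw' with rfl | rfl
            · rfl
            · exact absurd hadj' (fun hc => htri (x k) m hadj hc)
            · exact absurd hadj (fun hc => htri (x k) m hadj' hc)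
            · rfl
          rw [hew, hew', hww]
        · rw [d.1 heq, d'.1 heq]
        · obtain ⟨w, hw, hadj, hew⟩ := d.2.2 hgt
          obtain ⟨w', hw', hadj', hew'⟩ := d'.2.2 hgt
          have hww : w = w' := by
            rcases hw with rfl | rfl <;> rcases hw' with rfl | rfl
            · rfl
            · exact absurd hadj' (fun hc => htri (y m) k hadj hc)
            · exact absurd hadj (fun hc => htri (y m) k hadj' hc)
            · rfl
          rw [hew, hew', hww]
      · rw [hE] at h
        have d := spec.1 i z hE
        have d' := spec'.1 i z h.symm
        rw [d.2.2, d'.2.2]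
    have hle := Finset.card_le_card_of_injOn _ hmaps hinj
    have hTcard : T.card = ℓ ^ 2 + ∑ i : Fin ℓ, (NZ i).card := by
      rw [hT, Finset.card_disjSum, Finset.card_sigma]
      congr 1
      simp [sq]
    have hsum : ∑ i : Fin ℓ, (NZ i).card ≤ ℓ * p := by
      calc ∑ i : Fin ℓ, (NZ i).card ≤ ∑ _i : Fin ℓ, p := Finset.sum_le_sum fun i _ => hNZcard i
        _ = ℓ * p := by simp [Finset.sum_const, mul_comm]
    omega
end

section
/- Let B, C, D be simple graphs on the same vertex set V that are rainbow-triangle-free with B ⊆ C and B ⊆ D (as edge sets), B triangle-free, and suppose V is partitioned as V = X ⊔ Y ⊔ Z with X = {x₁, …, x_ℓ}, Y = {y₁, …, y_ℓ} such that {x_i, y_i} is an edge of B for each 1 ≤ i ≤ ℓ, every neighbor in B of a vertex of Z lies in X, and ν(B) = ℓ. Let q = |Z| and let p be the maximum, over x ∈ X, of the number of z ∈ Z with {x, z} an edge of B. Then (|C| + |D|)/2 ≤ ℓ² + ℓq + C(q,2) − C(p,2), where C(m,2) = m(m−1)/2. -/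
theorem stmt_16 {V : Type*} [Fintype V] [DecidableEq V]
    (B C D : SimpleGraph V)
    [DecidableRel B.Adj] [DecidableRel C.Adj] [DecidableRel D.Adj]
    (hRBT : RainbowTriangleFree ![B, C, D])
    (hBC : B ≤ C) (hBD : B ≤ D)
    (htf : B.CliqueFree 3)
    (ℓ : ℕ) (x y : Fin ℓ → V)
    (hxinj : Function.Injective x) (hyinj : Function.Injective y)
    (hxy : ∀ i j : Fin ℓ, x i ≠ y j)
    (Z : Set V) (hZ : Z = {v : V | v ∉ Set.range x ∧ v ∉ Set.range y})
    (hedge : ∀ i : Fin ℓ, B.Adj (x i) (y i))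
    (hZnbr : ∀ z ∈ Z, ∀ w : V, B.Adj z w → w ∈ Set.range x)
    (hν : ∀ M : Finset (Sym2 V), IsMatchingFinset B M → M.card ≤ ℓ)
    (q : ℕ) (hq : q = Z.ncard)
    (p : ℕ)
    (hp : p = Finset.univ.sup fun i : Fin ℓ => {z : V | z ∈ Z ∧ B.Adj (x i) z}.ncard) :
    ((C.edgeFinset.card : ℚ) + (D.edgeFinset.card : ℚ)) / 2 ≤
      (ℓ : ℚ) ^ 2 + (ℓ : ℚ) * q + (q : ℚ) * (q - 1) / 2 - (p : ℚ) * (p - 1) / 2 := by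
  classical
  set g : V → V → ℕ := fun u v => (if C.Adj u v then 1 else 0) + (if D.Adj u v then 1 else 0)
    with hgdef
  have g_le : ∀ u v, g u v ≤ 2 := by
    intro u v; simp only [hgdef]; split_ifs <;> norm_num
  have g_self : ∀ u, g u u = 0 := by intro u; simp [hgdef]
  have forb : ∀ a b c : V, B.Adj a b → C.Adj b c → D.Adj a c → False := by
    intro a b c h1 h2 h3
    exact hRBT 0 1 2 (by decide) (by decide) (by decide) a b c ⟨h1, h2, h3⟩
  have pairbound : ∀ a b : V, B.Adj a b → ∀ u : V, g a u + g b u ≤ 2 := by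
    intro a b hab u
    have f1 : ¬(C.Adj b u ∧ D.Adj a u) := fun h => forb a b u hab h.1 h.2
    have f2 : ¬(C.Adj a u ∧ D.Adj b u) := fun h => forb b a u hab.symm h.1 h.2
    rcases eq_or_ne u a with rfl | hua
    · have h1 := g_le b u; have h2 := g_self u; omega
    rcases eq_or_ne u b with rfl | hub
    · have h1 := g_le a u; have h2 := g_self u; omega
    by_cases c1 : C.Adj a u <;> by_cases c2 : C.Adj b u <;>
      by_cases d1 : D.Adj a u <;> by_cases d2 : D.Adj b u <;>
      simp [hgdef, c1, c2, d1, d2] <;>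
      first
        | omega
        | exact (f1 (And.intro c2 d1)).elim
        | exact (f2 (And.intro c1 d2)).elim
  have pairbound' : ∀ a b : V, B.Adj a b → ∀ u : V, g u a + g u b ≤ 2 := by
    intro a b hab u
    have f1 : ¬(C.Adj u b ∧ D.Adj u a) := fun h => forb a b u hab h.1.symm h.2.symm
    have f2 : ¬(C.Adj u a ∧ D.Adj u b) := fun h => forb b a u hab.symm h.1.symm h.2.symm
    rcases eq_or_ne u a with rfl | hua
    · have h1 := g_le u b; have h2 := g_self u; omega
    rcases eq_or_ne u b with rfl | hub
    · have h1 := g_le u a; have h2 := g_self u; omega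
    by_cases c1 : C.Adj u a <;> by_cases c2 : C.Adj u b <;>
      by_cases d1 : D.Adj u a <;> by_cases d2 : D.Adj u b <;>
      simp [hgdef, c1, c2, d1, d2] <;>
      first
        | omega
        | exact (f1 (And.intro c2 d1)).elim
        | exact (f2 (And.intro c1 d2)).elim
  -- the three vertex classes as finsets
  set Zf : Finset V := Z.toFinite.toFinset with hZfdef
  set Xf : Finset V := Finset.univ.image x with hXfdef
  set Yf : Finset V := Finset.univ.image y with hYfdef
  have hmemZ : ∀ v, v ∈ Zf ↔ v ∈ Z := fun v => Set.Finite.mem_toFinset _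
  have hmemX : ∀ v, v ∈ Xf ↔ ∃ i, x i = v := by
    intro v; simp [hXfdef]
  have hmemY : ∀ v, v ∈ Yf ↔ ∃ i, y i = v := by
    intro v; simp [hYfdef]
  have hdXY : Disjoint Xf Yf := by
    rw [Finset.disjoint_left]
    intro a ha hb
    obtain ⟨i, rfl⟩ := (hmemX a).1 ha
    obtain ⟨j, hj⟩ := (hmemY (x i)).1 hb
    exact hxy i j hj.symm
  have hdisj2 : Disjoint (Xf ∪ Yf) Zf := by
    rw [Finset.disjoint_right]
    intro a haZ haXY
    have hz := (hmemZ a).1 haZ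
    rw [hZ] at hz
    rcases Finset.mem_union.1 haXY with h | h
    · obtain ⟨i, hi⟩ := (hmemX a).1 h
      exact hz.1 ⟨i, hi⟩
    · obtain ⟨i, hi⟩ := (hmemY a).1 h
      exact hz.2 ⟨i, hi⟩
  have hunion : Xf ∪ Yf ∪ Zf = Finset.univ := by
    ext v
    simp only [Finset.mem_union, Finset.mem_univ, iff_true]
    by_cases hx : v ∈ Set.range x
    · obtain ⟨i, hi⟩ := hx; exact Or.inl (Or.inl ((hmemX v).2 ⟨i, hi⟩))
    by_cases hy' : v ∈ Set.range y
    · obtain ⟨i, hi⟩ := hy'; exact Or.inl (Or.inr ((hmemY v).2 ⟨i, hi⟩))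
    · refine Or.inr ((hmemZ v).2 ?_)
      rw [hZ]; exact ⟨hx, hy'⟩
  have hXcard : Xf.card = ℓ := by
    rw [hXfdef, Finset.card_image_of_injective _ hxinj, Finset.card_univ, Fintype.card_fin]
  have hYcard : Yf.card = ℓ := by
    rw [hYfdef, Finset.card_image_of_injective _ hyinj, Finset.card_univ, Fintype.card_fin]
  have hZcard : Zf.card = q := by
    rw [hq, hZfdef]; exact (Set.ncard_eq_toFinset_card _ _).symm
  have hcardV : Fintype.card V = ℓ + ℓ + q := by
    rw [← Finset.card_univ, ← hunion, Finset.card_union_of_disjoint hdisj2,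
      Finset.card_union_of_disjoint hdXY, hXcard, hYcard, hZcard]
  have split_univ : ∀ f : V → ℕ,
      (∑ v, f v) = (∑ i, f (x i)) + (∑ i, f (y i)) + ∑ v ∈ Zf, f v := by
    intro f
    rw [← hunion, Finset.sum_union hdisj2, Finset.sum_union hdXY, hXfdef, hYfdef,
      Finset.sum_image (fun a _ b _ h => hxinj h), Finset.sum_image (fun a _ b _ h => hyinj h)]
  -- total weight equals twice edge counts
  have hrow : ∀ v : V, (∑ u, g v u) = C.degree v + D.degree v := by
    intro v
    have hC' : C.degree v = ∑ u, (if C.Adj v u then 1 else 0) := by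
      rw [show C.degree v = (C.neighborFinset v).card from rfl,
        SimpleGraph.neighborFinset_eq_filter, Finset.card_filter]
    have hD' : D.degree v = ∑ u, (if D.Adj v u then 1 else 0) := by
      rw [show D.degree v = (D.neighborFinset v).card from rfl,
        SimpleGraph.neighborFinset_eq_filter, Finset.card_filter]
    simp only [hgdef]
    rw [Finset.sum_add_distrib, ← hC', ← hD']
  have htot : 2 * C.edgeFinset.card + 2 * D.edgeFinset.card = ∑ v, (∑ u, g v u) := by
    have h1 : (∑ v, (∑ u, g v u)) = ∑ v, (C.degree v + D.degree v) :=
      Finset.sum_congr rfl fun v _ => hrow v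
    rw [h1, Finset.sum_add_distrib, SimpleGraph.sum_degrees_eq_twice_card_edges,
      SimpleGraph.sum_degrees_eq_twice_card_edges]
  -- the set P
  obtain ⟨Pf, hPZ, hPcard, hPzero⟩ :
      ∃ Pf : Finset V, Pf ⊆ Zf ∧ Pf.card = p ∧ ∀ z ∈ Pf, ∀ z' ∈ Pf, g z z' = 0 := by
    rcases Nat.eq_zero_or_pos ℓ with hl0 | hlpos
    · refine ⟨∅, Finset.empty_subset _, ?_, by simp⟩
      subst hl0
      simp [hp]
    · haveI : Nonempty (Fin ℓ) := ⟨⟨0, hlpos⟩⟩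
      obtain ⟨i0, -, hi0⟩ := Finset.exists_mem_eq_sup (Finset.univ : Finset (Fin ℓ))
        Finset.univ_nonempty (fun i => {z : V | z ∈ Z ∧ B.Adj (x i) z}.ncard)
      refine ⟨({z : V | z ∈ Z ∧ B.Adj (x i0) z}).toFinite.toFinset, ?_, ?_, ?_⟩
      · intro z hz
        rw [Set.Finite.mem_toFinset] at hz
        exact (hmemZ z).2 hz.1
      · rw [← Set.ncard_eq_toFinset_card _ _, hp, hi0]
      · intro z hz z' hz'
        rw [Set.Finite.mem_toFinset] at hz hz'
        have h1 : B.Adj (x i0) z := hz.2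
        have h2 : B.Adj (x i0) z' := hz'.2
        have hc : ¬ C.Adj z z' := fun h => forb (x i0) z z' h1 h (hBD h2)
        have hd : ¬ D.Adj z z' := fun h => forb z' (x i0) z h2.symm (hBC h1) h.symm
        simp [hgdef, hc, hd]
  set Qf : Finset V := Zf \ Pf with hQfdef
  set r : ℕ := Qf.card with hrdef
  have hpr : r + p = q := by
    rw [hrdef, ← hZcard, ← hPcard, hQfdef]
    exact Finset.card_sdiff_add_card_eq_card hPZ
  have hZPQ : Pf ∪ Qf = Zf := Finset.union_sdiff_of_subset hPZ
  have hdPQ : Disjoint Pf Qf := Finset.disjoint_sdiff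
  have innersplit : ∀ f : V → ℕ, (∑ u ∈ Zf, f u) = (∑ u ∈ Pf, f u) + ∑ u ∈ Qf, f u := by
    intro f; rw [← hZPQ, Finset.sum_union hdPQ]
  have hProw : ∀ z ∈ Pf, (∑ u ∈ Zf, g z u) ≤ 2 * r := by
    intro z hz
    rw [innersplit]
    have h1 : (∑ u ∈ Pf, g z u) = 0 := Finset.sum_eq_zero fun u hu => hPzero z hz u hu
    have h2 : (∑ u ∈ Qf, g z u) ≤ ∑ _u ∈ Qf, 2 := Finset.sum_le_sum fun u _ => g_le z u
    rw [Finset.sum_const, smul_eq_mul] at h2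
    omega
  have hQrow : ∀ z ∈ Qf, (∑ u ∈ Zf, g z u) + 2 ≤ 2 * p + 2 * r := by
    intro z hz
    rw [innersplit]
    have h1 : (∑ u ∈ Pf, g z u) ≤ ∑ _u ∈ Pf, 2 := Finset.sum_le_sum fun u _ => g_le z u
    rw [Finset.sum_const, smul_eq_mul, hPcard] at h1
    have he : g z z + ∑ u ∈ Qf.erase z, g z u = ∑ u ∈ Qf, g z u :=
      Finset.add_sum_erase Qf (g z) hz
    have h3 : (∑ u ∈ Qf.erase z, g z u) ≤ ∑ _u ∈ Qf.erase z, 2 :=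
      Finset.sum_le_sum fun u _ => g_le z u
    rw [Finset.sum_const, smul_eq_mul, Finset.card_erase_of_mem hz] at h3
    have hr1 : 1 ≤ r := by
      rw [hrdef]; exact Finset.card_pos.2 ⟨z, hz⟩
    have h0 := g_self z
    omega
  have hZZ : (∑ z ∈ Zf, ∑ u ∈ Zf, g z u) + r * 2 ≤ p * (2 * r) + r * (2 * p + 2 * r) := by
    have hsplitZ : (∑ z ∈ Zf, ∑ u ∈ Zf, g z u)
        = (∑ z ∈ Pf, ∑ u ∈ Zf, g z u) + ∑ z ∈ Qf, ∑ u ∈ Zf, g z u :=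
      innersplit _
    have hA : (∑ z ∈ Pf, ∑ u ∈ Zf, g z u) ≤ p * (2 * r) := by
      calc (∑ z ∈ Pf, ∑ u ∈ Zf, g z u) ≤ ∑ _z ∈ Pf, 2 * r :=
            Finset.sum_le_sum fun z hz => hProw z hz
        _ = p * (2 * r) := by rw [Finset.sum_const, smul_eq_mul, hPcard]
    have hB : (∑ z ∈ Qf, ∑ u ∈ Zf, g z u) + r * 2 ≤ r * (2 * p + 2 * r) := by
      have h1 : (∑ z ∈ Qf, ((∑ u ∈ Zf, g z u) + 2)) ≤ ∑ _z ∈ Qf, (2 * p + 2 * r) :=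
        Finset.sum_le_sum fun z hz => hQrow z hz
      rw [Finset.sum_add_distrib, Finset.sum_const, Finset.sum_const, smul_eq_mul,
        smul_eq_mul, ← hrdef] at h1
      exact h1
    omega
  have hXYrows : (∑ i, ∑ u, g (x i) u) + (∑ i, ∑ u, g (y i) u) ≤ ℓ * ((ℓ + ℓ + q) * 2) := by
    have hone : ∀ i : Fin ℓ, (∑ u, g (x i) u) + (∑ u, g (y i) u) ≤ (ℓ + ℓ + q) * 2 := by
      intro i
      rw [← Finset.sum_add_distrib]
      calc (∑ u, (g (x i) u + g (y i) u)) ≤ ∑ _u : V, 2 :=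
            Finset.sum_le_sum fun u _ => pairbound _ _ (hedge i) u
        _ = (ℓ + ℓ + q) * 2 := by
            rw [Finset.sum_const, smul_eq_mul, Finset.card_univ, hcardV]
    calc (∑ i, ∑ u, g (x i) u) + (∑ i, ∑ u, g (y i) u)
        = ∑ i : Fin ℓ, ((∑ u, g (x i) u) + (∑ u, g (y i) u)) := Finset.sum_add_distrib.symm
      _ ≤ ∑ _i : Fin ℓ, (ℓ + ℓ + q) * 2 := Finset.sum_le_sum fun i _ => hone i
      _ = ℓ * ((ℓ + ℓ + q) * 2) := by
          rw [Finset.sum_const, smul_eq_mul, Finset.card_univ, Fintype.card_fin]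
  have hZrows : (∑ z ∈ Zf, ∑ u, g z u) ≤ q * (ℓ * 2) + ∑ z ∈ Zf, ∑ u ∈ Zf, g z u := by
    have hone : ∀ z ∈ Zf, (∑ u, g z u) ≤ ℓ * 2 + ∑ u ∈ Zf, g z u := by
      intro z _
      rw [split_univ (g z)]
      have h1 : (∑ i, (g z (x i) + g z (y i))) ≤ ∑ _i : Fin ℓ, 2 :=
        Finset.sum_le_sum fun i _ => pairbound' _ _ (hedge i) z
      rw [Finset.sum_add_distrib, Finset.sum_const, smul_eq_mul, Finset.card_univ,
        Fintype.card_fin] at h1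
      omega
    calc (∑ z ∈ Zf, ∑ u, g z u) ≤ ∑ z ∈ Zf, (ℓ * 2 + ∑ u ∈ Zf, g z u) :=
          Finset.sum_le_sum hone
      _ = q * (ℓ * 2) + ∑ z ∈ Zf, ∑ u ∈ Zf, g z u := by
          rw [Finset.sum_add_distrib, Finset.sum_const, smul_eq_mul, hZcard]
  have hsplitmain : (∑ v, (∑ u, g v u))
      = (∑ i, ∑ u, g (x i) u) + (∑ i, ∑ u, g (y i) u) + ∑ z ∈ Zf, ∑ u, g z u :=
    split_univ _
  have main : 2 * C.edgeFinset.card + 2 * D.edgeFinset.card + r * 2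
      ≤ ℓ * ((ℓ + ℓ + q) * 2) + (q * (ℓ * 2) + (p * (2 * r) + r * (2 * p + 2 * r))) := by
    have h0 := htot.trans hsplitmain
    linarith [hXYrows, hZrows, hZZ]
  have mainQ : 2 * (C.edgeFinset.card : ℚ) + 2 * (D.edgeFinset.card : ℚ) + (r : ℚ) * 2
      ≤ (ℓ : ℚ) * (((ℓ : ℚ) + ℓ + q) * 2)
        + ((q : ℚ) * ((ℓ : ℚ) * 2) + ((p : ℚ) * (2 * r) + (r : ℚ) * (2 * p + 2 * r))) := by
    exact_mod_cast main
  have hqrp : (q : ℚ) = (r : ℚ) + (p : ℚ) := by exact_mod_cast hpr.symm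
  rw [hqrp] at mainQ ⊢
  nlinarith [mainQ]
end

section
/- Let n ≥ 5 and let G₁, G₂, G₃ be simple graphs on the same vertex set V with |V| = n that are rainbow-triangle-free and satisfy |G₁| + |G₂| + |G₃| = n(n − 1). Then, up to permuting the indices, two of the three graphs are the complete graph on V and the third has no edges. -/
open Finset

def NoSDR (S1 S2 S3 : Finset (Fin 3)) : Prop :=
  ∀ i ∈ S1, ∀ j ∈ S2, ∀ k ∈ S3, i = j ∨ j = k ∨ i = k

instance (S1 S2 S3 : Finset (Fin 3)) : Decidable (NoSDR S1 S2 S3) := by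
  unfold NoSDR; infer_instance

lemma lem1 : ∀ S1 S2 S3 : Finset (Fin 3), NoSDR S1 S2 S3 → S1.card + S2.card + S3.card ≤ 6 := by
  decide

lemma lem2 : ∀ S1 S2 S3 : Finset (Fin 3), NoSDR S1 S2 S3 → S1.card = 3 →
    S1.card + S2.card + S3.card = 6 →
    (S2.card = 3 ∧ S3.card = 0) ∨ (S2.card = 0 ∧ S3.card = 3) := by decide

lemma lem3 : ∀ S1 S2 S3 : Finset (Fin 3), NoSDR S1 S2 S3 → S1.card = 2 → S2.card = 2 →
    S3.card = 2 → S1 = S2 ∧ S1 = S3 := by decide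

lemma lem4 : ∀ T : Finset (Fin 3), T.card = 2 →
    T = {0, 1} ∨ T = {0, 2} ∨ T = {1, 2} := by decide

open Classical in
noncomputable def Sset {V : Type*} [Fintype V] (G : Fin 3 → SimpleGraph V) (a b : V) :
    Finset (Fin 3) :=
  Finset.univ.filter fun i => (G i).Adj a b

lemma mem_Sset {V : Type*} [Fintype V] (G : Fin 3 → SimpleGraph V) (a b : V) (i : Fin 3) :
    i ∈ Sset G a b ↔ (G i).Adj a b := by
  simp [Sset]

section main

set_option linter.unusedSectionVars false

variable {V : Type*} [Fintype V] [DecidableEq V] (G : Fin 3 → SimpleGraph V)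

lemma Sset_card_le (a b : V) : (Sset G a b).card ≤ 3 := by
  classical
  exact le_trans (Finset.card_filter_le _ _) (by simp)

lemma Sset_self (a : V) : (Sset G a a).card = 0 := by
  simp [Sset, Finset.filter_eq_empty_iff]

lemma Sset_symm (a b : V) : Sset G a b = Sset G b a := by
  ext i; simp [Sset, SimpleGraph.adj_comm]

lemma card_filter_ne2 (a b : V) (hab : a ≠ b) :
    (univ.filter fun c : V => a ≠ c ∧ b ≠ c).card = Fintype.card V - 2 := by
  have h : (univ.filter fun c : V => a ≠ c ∧ b ≠ c) = univ \ {a, b} := by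
    ext c
    simp only [mem_filter, mem_univ, true_and, mem_sdiff, mem_insert, mem_singleton]
    constructor
    · rintro ⟨h1, h2⟩
      exact fun h => h.elim (fun e => h1 e.symm) (fun e => h2 e.symm)
    · intro h; exact ⟨fun e => h (Or.inl e.symm), fun e => h (Or.inr e.symm)⟩
  rw [h, Finset.card_sdiff_of_subset (Finset.subset_univ _), Finset.card_univ]
  congr 1
  rw [Finset.card_insert_of_notMem (by simp [hab]), Finset.card_singleton]

lemma card_filter_ne1 (a : V) :
    (univ.filter fun b : V => a ≠ b).card = Fintype.card V - 1 := by
  have h : (univ.filter fun b : V => a ≠ b) = univ.erase a := by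
    ext b; simp [mem_erase, ne_comm]
  rw [h, Finset.card_erase_of_mem (mem_univ a), Finset.card_univ]

lemma sum_ite_card {P : V → Prop} [DecidablePred P] (K : ℕ) :
    (∑ c : V, if P c then K else 0) = (univ.filter P).card * K := by
  rw [← Finset.sum_filter, Finset.sum_const, smul_eq_mul]

lemma H1 (a b : V) :
    (∑ c : V, if a ≠ b ∧ a ≠ c ∧ b ≠ c then (Sset G a b).card else 0)
      = (Fintype.card V - 2) * (Sset G a b).card := by
  by_cases hab : a = b
  · subst hab; simp [Sset_self]
  · have h : ∀ c : V, (if a ≠ b ∧ a ≠ c ∧ b ≠ c then (Sset G a b).card else 0)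
        = (if a ≠ c ∧ b ≠ c then (Sset G a b).card else 0) := by
      intro c; by_cases h : a ≠ c ∧ b ≠ c <;> simp [h, hab]
    rw [Finset.sum_congr rfl fun c _ => h c, sum_ite_card, card_filter_ne2 a b hab]

lemma H2 (b c : V) :
    (∑ a : V, if a ≠ b ∧ a ≠ c ∧ b ≠ c then (Sset G b c).card else 0)
      = (Fintype.card V - 2) * (Sset G b c).card := by
  by_cases hbc : b = c
  · subst hbc; simp [Sset_self]
  · have h : ∀ a : V, (if a ≠ b ∧ a ≠ c ∧ b ≠ c then (Sset G b c).card else 0)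
        = (if b ≠ a ∧ c ≠ a then (Sset G b c).card else 0) := by
      intro a
      by_cases h1 : a = b <;> by_cases h2 : a = c <;> simp_all [ne_comm]
    rw [Finset.sum_congr rfl fun a _ => h a, sum_ite_card, card_filter_ne2 b c hbc]

lemma H3 (a c : V) :
    (∑ b : V, if a ≠ b ∧ a ≠ c ∧ b ≠ c then (Sset G a c).card else 0)
      = (Fintype.card V - 2) * (Sset G a c).card := by
  by_cases hac : a = c
  · subst hac; simp [Sset_self]
  · have h : ∀ b : V, (if a ≠ b ∧ a ≠ c ∧ b ≠ c then (Sset G a c).card else 0)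
        = (if a ≠ b ∧ c ≠ b then (Sset G a c).card else 0) := by
      intro b
      by_cases h1 : b = a <;> by_cases h2 : b = c <;> simp_all [ne_comm]
    rw [Finset.sum_congr rfl fun b _ => h b, sum_ite_card, card_filter_ne2 a c hac]

end main
section main2

set_option linter.unusedSectionVars false

variable {V : Type*} [Fintype V] [DecidableEq V] (G : Fin 3 → SimpleGraph V)

noncomputable def Dfun (a b c : V) : ℕ :=
  if a ≠ b ∧ a ≠ c ∧ b ≠ c then
    (Sset G a b).card + (Sset G b c).card + (Sset G a c).card
  else 0

def Efun (a b c : V) : ℕ := if a ≠ b ∧ a ≠ c ∧ b ≠ c then 6 else 0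

lemma sumD :
    ∑ a : V, ∑ b : V, ∑ c : V, Dfun G a b c
      = 3 * ((Fintype.card V - 2) * ∑ a : V, ∑ b : V, (Sset G a b).card) := by
  have split : ∀ a b c : V, Dfun G a b c
      = (if a ≠ b ∧ a ≠ c ∧ b ≠ c then (Sset G a b).card else 0)
        + (if a ≠ b ∧ a ≠ c ∧ b ≠ c then (Sset G b c).card else 0)
        + (if a ≠ b ∧ a ≠ c ∧ b ≠ c then (Sset G a c).card else 0) := by
    intro a b c
    by_cases h : a ≠ b ∧ a ≠ c ∧ b ≠ c <;> simp [Dfun, h]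
  simp only [split, Finset.sum_add_distrib]
  have part1 : (∑ a : V, ∑ b : V, ∑ c : V,
      if a ≠ b ∧ a ≠ c ∧ b ≠ c then (Sset G a b).card else 0)
      = (Fintype.card V - 2) * ∑ a : V, ∑ b : V, (Sset G a b).card := by
    rw [Finset.sum_congr rfl fun a _ => Finset.sum_congr rfl fun b _ => H1 G a b]
    simp only [← Finset.mul_sum]
  have part2 : (∑ a : V, ∑ b : V, ∑ c : V,
      if a ≠ b ∧ a ≠ c ∧ b ≠ c then (Sset G b c).card else 0)
      = (Fintype.card V - 2) * ∑ a : V, ∑ b : V, (Sset G a b).card := by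
    rw [Finset.sum_comm]
    rw [Finset.sum_congr rfl fun b _ => Finset.sum_comm]
    rw [Finset.sum_congr rfl fun b _ => Finset.sum_congr rfl fun c _ => H2 G b c]
    simp only [← Finset.mul_sum]
  have part3 : (∑ a : V, ∑ b : V, ∑ c : V,
      if a ≠ b ∧ a ≠ c ∧ b ≠ c then (Sset G a c).card else 0)
      = (Fintype.card V - 2) * ∑ a : V, ∑ b : V, (Sset G a b).card := by
    rw [Finset.sum_congr rfl fun a _ => Finset.sum_comm]
    rw [Finset.sum_congr rfl fun a _ => Finset.sum_congr rfl fun c _ => H3 G a c]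
    simp only [← Finset.mul_sum]
  rw [part1, part2, part3]; ring

lemma sumE :
    ∑ a : V, ∑ b : V, ∑ c : V, Efun a b c
      = Fintype.card V * ((Fintype.card V - 1) * ((Fintype.card V - 2) * 6)) := by
  have e1 : ∀ a b : V, (∑ c : V, Efun a b c)
      = if a ≠ b then (Fintype.card V - 2) * 6 else 0 := by
    intro a b
    by_cases hab : a = b
    · subst hab; simp [Efun]
    · have h : ∀ c : V, Efun a b c = (if a ≠ c ∧ b ≠ c then 6 else 0) := by
        intro c; by_cases h : a ≠ c ∧ b ≠ c <;> simp [Efun, h, hab]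
      rw [Finset.sum_congr rfl fun c _ => h c, sum_ite_card, card_filter_ne2 a b hab,
        if_pos hab]
  have e2 : ∀ a : V, (∑ b : V, if a ≠ b then (Fintype.card V - 2) * 6 else 0)
      = (Fintype.card V - 1) * ((Fintype.card V - 2) * 6) := by
    intro a
    rw [sum_ite_card, card_filter_ne1 a]
  rw [Finset.sum_congr rfl fun a _ => Finset.sum_congr rfl fun b _ => e1 a b]
  rw [Finset.sum_congr rfl fun a _ => e2 a]
  rw [Finset.sum_const, Finset.card_univ, smul_eq_mul]

lemma triple_eq (n : ℕ) (hn : 5 ≤ n) (hV : Fintype.card V = n)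
    (hnsdr : ∀ a b c : V, NoSDR (Sset G a b) (Sset G b c) (Sset G a c))
    (hpairs : ∑ a : V, ∑ b : V, (Sset G a b).card = 2 * (n * (n - 1)))
    (a b c : V) (hab : a ≠ b) (hac : a ≠ c) (hbc : b ≠ c) :
    (Sset G a b).card + (Sset G b c).card + (Sset G a c).card = 6 := by
  have hDle : ∀ p : V × V × V, Dfun G p.1 p.2.1 p.2.2 ≤ Efun p.1 p.2.1 p.2.2 := by
    intro p
    unfold Dfun Efun
    split_ifs with h
    · exact lem1 _ _ _ (hnsdr p.1 p.2.1 p.2.2)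
    · exact le_refl 0
  have hsums : ∑ p : V × V × V, Dfun G p.1 p.2.1 p.2.2 = ∑ p : V × V × V, Efun p.1 p.2.1 p.2.2 := by
    have e1 : (∑ p : V × V × V, Dfun G p.1 p.2.1 p.2.2)
        = ∑ a : V, ∑ b : V, ∑ c : V, Dfun G a b c := by
      rw [Fintype.sum_prod_type]
      exact Finset.sum_congr rfl fun a _ =>
        Fintype.sum_prod_type (f := fun q : V × V => Dfun G a q.1 q.2)
    have e2 : (∑ p : V × V × V, Efun p.1 p.2.1 p.2.2)
        = ∑ a : V, ∑ b : V, ∑ c : V, Efun (a : V) b c := by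
      rw [Fintype.sum_prod_type]
      exact Finset.sum_congr rfl fun a _ =>
        Fintype.sum_prod_type (f := fun q : V × V => Efun a q.1 q.2)
    rw [e1, e2, sumD, sumE, hV, hpairs]
    have h2 : (2 : ℕ) ≤ n := by omega
    generalize n - 2 = p
    generalize n - 1 = q
    ring
  have hpt := (Finset.sum_eq_sum_iff_of_le fun p _ => hDle p).mp hsums (a, b, c)
    (Finset.mem_univ _)
  simpa [Dfun, Efun, hab, hac, hbc] using hpt

end main2
lemma deg_sum_aux {V : Type*} [Fintype V] [DecidableEq V] (H : SimpleGraph V)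
    [DecidableRel H.Adj] :
    (∑ a : V, ∑ b : V, if H.Adj a b then 1 else 0) = 2 * H.edgeFinset.card := by
  have h : ∀ a : V, (∑ b : V, if H.Adj a b then 1 else 0) = H.degree a := by
    intro a
    rw [← Finset.card_filter]
    rw [← SimpleGraph.neighborFinset_eq_filter]
    rfl
  rw [Finset.sum_congr rfl fun a _ => h a]
  exact SimpleGraph.sum_degrees_eq_twice_card_edges H



theorem stmt_19 {V : Type*} [Fintype V] [DecidableEq V] (n : ℕ) (hn : 5 ≤ n)
    (hV : Fintype.card V = n)
    (G₁ G₂ G₃ : SimpleGraph V)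
    [DecidableRel G₁.Adj] [DecidableRel G₂.Adj] [DecidableRel G₃.Adj]
    (hRBT : RainbowTriangleFree ![G₁, G₂, G₃])
    (hsum : G₁.edgeFinset.card + G₂.edgeFinset.card + G₃.edgeFinset.card = n * (n - 1)) :
    (G₁ = ⊤ ∧ G₂ = ⊤ ∧ G₃ = ⊥) ∨ (G₁ = ⊤ ∧ G₃ = ⊤ ∧ G₂ = ⊥) ∨
      (G₂ = ⊤ ∧ G₃ = ⊤ ∧ G₁ = ⊥) := by
  have hnsdr : ∀ a b c : V,
      NoSDR (Sset ![G₁, G₂, G₃] a b) (Sset ![G₁, G₂, G₃] b c) (Sset ![G₁, G₂, G₃] a c) := by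
    intro a b c i hi j hj k hk
    by_contra h
    push_neg at h
    exact hRBT i j k h.1 h.2.1 h.2.2 a b c
      ⟨(mem_Sset _ _ _ _).mp hi, (mem_Sset _ _ _ _).mp hj, (mem_Sset _ _ _ _).mp hk⟩
  have hcard : ∀ a b : V, (Sset ![G₁, G₂, G₃] a b).card
      = (if G₁.Adj a b then 1 else 0) + (if G₂.Adj a b then 1 else 0)
        + (if G₃.Adj a b then 1 else 0) := by
    intro a b
    classical
    have h : (Sset ![G₁, G₂, G₃] a b).card
        = ∑ i : Fin 3, if (![G₁, G₂, G₃] i).Adj a b then 1 else 0 := by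
      unfold Sset
      rw [Finset.card_filter]
    rw [h, Fin.sum_univ_three]
    simp only [Matrix.cons_val_zero, Matrix.cons_val_one, Matrix.head_cons,
      Matrix.cons_val_two, Matrix.tail_cons]
    congr
  have hpairs : ∑ a : V, ∑ b : V, (Sset ![G₁, G₂, G₃] a b).card = 2 * (n * (n - 1)) := by
    rw [Finset.sum_congr rfl fun a _ => Finset.sum_congr rfl fun b _ => hcard a b]
    simp only [Finset.sum_add_distrib]
    rw [deg_sum_aux G₁, deg_sum_aux G₂, deg_sum_aux G₃]
    omega
  have E6 := triple_eq ![G₁, G₂, G₃] n hn hV hnsdr hpairs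
  have hle3 := Sset_card_le ![G₁, G₂, G₃]
  have hsymm := Sset_symm ![G₁, G₂, G₃]
  -- no pair lies in all three graphs
  have hno3 : ∀ a b : V, a ≠ b → (Sset ![G₁, G₂, G₃] a b).card ≤ 2 := by
    intro a b hab
    by_contra hcon
    have h3 : (Sset ![G₁, G₂, G₃] a b).card = 3 := le_antisymm (hle3 a b) (by omega)
    -- find three further vertices
    have hbig : 3 ≤ (Finset.univ \ {a, b} : Finset V).card := by
      rw [Finset.card_sdiff_of_subset (Finset.subset_univ _), Finset.card_univ, hV]
      have h2 : ({a, b} : Finset V).card ≤ 2 :=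
        le_trans (Finset.card_insert_le a {b}) (by simp)
      omega
    obtain ⟨c, hc⟩ := Finset.card_pos.mp (by omega : 0 < (Finset.univ \ {a, b} : Finset V).card)
    have hbig1 : 2 ≤ ((Finset.univ \ {a, b}).erase c).card := by
      rw [Finset.card_erase_of_mem hc]; omega
    obtain ⟨d, hd⟩ := Finset.card_pos.mp (by omega : 0 < ((Finset.univ \ {a, b}).erase c).card)
    have hbig2 : 1 ≤ (((Finset.univ \ {a, b}).erase c).erase d).card := by
      rw [Finset.card_erase_of_mem hd, Finset.card_erase_of_mem hc]; omega
    obtain ⟨w, hw⟩ := Finset.card_pos.mp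
      (by omega : 0 < (((Finset.univ \ {a, b}).erase c).erase d).card)
    simp only [Finset.mem_erase, Finset.mem_sdiff, Finset.mem_univ, true_and,
      Finset.mem_insert, Finset.mem_singleton, not_or] at hc hd hw
    obtain ⟨hca, hcb⟩ := hc
    obtain ⟨hdc, hda, hdb⟩ := hd
    obtain ⟨hwd, hwc, hwa, hwb⟩ := hw
    have attach : ∀ x : V, x ≠ a → x ≠ b →
        ((Sset ![G₁, G₂, G₃] b x).card = 3 ∧ (Sset ![G₁, G₂, G₃] a x).card = 0) ∨
        ((Sset ![G₁, G₂, G₃] b x).card = 0 ∧ (Sset ![G₁, G₂, G₃] a x).card = 3) := by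
      intro x hxa hxb
      exact lem2 _ _ _ (hnsdr a b x) h3 (E6 a b x hab (Ne.symm hxa) (Ne.symm hxb))
    have key : ∀ u x y : V, u ≠ x → u ≠ y → x ≠ y →
        (Sset ![G₁, G₂, G₃] u x).card = 0 → (Sset ![G₁, G₂, G₃] u y).card = 0 → False := by
      intro u x y hux huy hxy h1 h2
      have h6 := E6 x u y (fun e => hux e.symm) hxy huy
      rw [hsymm x u] at h6
      have := hle3 x y
      omega
    rcases attach c hca hcb with ⟨hc1, hc2⟩ | ⟨hc1, hc2⟩ <;>
      rcases attach d hda hdb with ⟨hd1, hd2⟩ | ⟨hd1, hd2⟩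
    · exact key a c d (fun e => hca e.symm) (fun e => hda e.symm) (fun e => hdc e.symm) hc2 hd2
    · rcases attach w hwa hwb with ⟨hw1, hw2⟩ | ⟨hw1, hw2⟩
      · exact key a c w (fun e => hca e.symm) (fun e => hwa e.symm) (fun e => hwc e.symm) hc2 hw2
      · exact key b d w (fun e => hdb e.symm) (fun e => hwb e.symm) (fun e => hwd e.symm) hd1 hw1
    · rcases attach w hwa hwb with ⟨hw1, hw2⟩ | ⟨hw1, hw2⟩
      · exact key a d w (fun e => hda e.symm) (fun e => hwa e.symm) (fun e => hwd e.symm) hd2 hw2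
      · exact key b c w (fun e => hcb e.symm) (fun e => hwb e.symm) (fun e => hwc e.symm) hc1 hw1
    · exact key b c d (fun e => hcb e.symm) (fun e => hdb e.symm) (fun e => hdc e.symm) hc1 hd1
  -- every pair lies in exactly two graphs
  have hM2 : ∀ a b : V, a ≠ b → (Sset ![G₁, G₂, G₃] a b).card = 2 := by
    intro a b hab
    have hbig : 1 ≤ (Finset.univ \ {a, b} : Finset V).card := by
      rw [Finset.card_sdiff_of_subset (Finset.subset_univ _), Finset.card_univ, hV]
      have h2 : ({a, b} : Finset V).card ≤ 2 :=
        le_trans (Finset.card_insert_le a {b}) (by simp)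
      omega
    obtain ⟨c, hc⟩ := Finset.card_pos.mp (by omega : 0 < (Finset.univ \ {a, b} : Finset V).card)
    simp only [Finset.mem_sdiff, Finset.mem_univ, true_and, Finset.mem_insert,
      Finset.mem_singleton, not_or] at hc
    have h6 := E6 a b c hab (fun e => hc.1 e.symm) (fun e => hc.2 e.symm)
    have t1 := hno3 a b hab
    have t2 := hno3 b c (fun e => hc.2 e.symm)
    have t3 := hno3 a c (fun e => hc.1 e.symm)
    omega
  have hshare : ∀ a b c : V, a ≠ b → a ≠ c →
      Sset ![G₁, G₂, G₃] a b = Sset ![G₁, G₂, G₃] a c := by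
    intro a b c hab hac
    by_cases hbc : b = c
    · subst hbc; rfl
    · have h := lem3 _ _ _ (hnsdr b a c) (hM2 b a (Ne.symm hab)) (hM2 a c hac) (hM2 b c hbc)
      rw [hsymm a b]
      exact h.1
  have hglob : ∀ a b c d : V, a ≠ b → c ≠ d →
      Sset ![G₁, G₂, G₃] a b = Sset ![G₁, G₂, G₃] c d := by
    intro a b c d hab hcd
    by_cases hac : a = c
    · subst hac; exact hshare a b d hab hcd
    · by_cases had : a = d
      · subst had
        rw [hshare a b c hab hac]
        exact hsymm a c
      · calc Sset ![G₁, G₂, G₃] a b = Sset ![G₁, G₂, G₃] a c := hshare a b c hab hac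
          _ = Sset ![G₁, G₂, G₃] c a := hsymm a c
          _ = Sset ![G₁, G₂, G₃] c d := hshare c a d (Ne.symm hac) hcd
  obtain ⟨a₀, b₀, hab₀⟩ := Fintype.exists_pair_of_one_lt_card (by omega : 1 < Fintype.card V)
  have hT2 : (Sset ![G₁, G₂, G₃] a₀ b₀).card = 2 := hM2 _ _ hab₀
  have hAdj : ∀ (i : Fin 3) (a b : V), a ≠ b →
      ((![G₁, G₂, G₃] i).Adj a b ↔ i ∈ Sset ![G₁, G₂, G₃] a₀ b₀) := by
    intro i a b hab
    rw [← hglob a b a₀ b₀ hab hab₀, mem_Sset]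
  have htop : ∀ i : Fin 3, i ∈ Sset ![G₁, G₂, G₃] a₀ b₀ → (![G₁, G₂, G₃] i) = ⊤ := by
    intro i hi
    ext a b
    simp only [SimpleGraph.top_adj]
    exact ⟨fun h => h.ne, fun h => (hAdj i a b h).mpr hi⟩
  have hbot : ∀ i : Fin 3, i ∉ Sset ![G₁, G₂, G₃] a₀ b₀ → (![G₁, G₂, G₃] i) = ⊥ := by
    intro i hi
    ext a b
    simp only [SimpleGraph.bot_adj, iff_false]
    intro h
    exact hi ((hAdj i a b h.ne).mp h)
  rcases lem4 _ hT2 with h | h | h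
  · left
    refine ⟨?_, ?_, ?_⟩
    · have := htop 0 (by rw [h]; decide)
      simpa using this
    · have := htop 1 (by rw [h]; decide)
      simpa using this
    · have := hbot 2 (by rw [h]; decide)
      simpa using this
  · right; left
    refine ⟨?_, ?_, ?_⟩
    · have := htop 0 (by rw [h]; decide)
      simpa using this
    · have := htop 2 (by rw [h]; decide)
      simpa using this
    · have := hbot 1 (by rw [h]; decide)
      simpa using this
  · right; right
    refine ⟨?_, ?_, ?_⟩
    · have := htop 1 (by rw [h]; decide)
      simpa using this
    · have := htop 2 (by rw [h]; decide)
      simpa using this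
    · have := hbot 0 (by rw [h]; decide)
      simpa using this
end
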